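/- arXiv:math/0512452 — 8 statements merged into one kernel-verified Lean document; each statement's English description precedes it below -/
import Mathlib

section
/- Let n be a positive integer and let f : 𝔻ⁿ → 𝔻 be a holomorphic function from the open unit polydisk in ℂⁿ to the open unit disk in ℂ. Then for every point z = (z₁, …, zₙ) ∈ 𝔻ⁿ, one has ∑_{i=1}^{n} (1 − |z_i|²) |∂f/∂z_i (z)| ≤ 1 − |f(z)|². -/
/-!
Compose `f` with a holomorphic disc through `z`: `ζ ↦ (φ_{z₁}(c₁ζ), …, φ_{zₙ}(cₙζ))`, where
`φ_a(w) = (w + a) / (1 + ā w)` is a disc automorphism and the unimodular `cᵢ` rotate each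
`∂f/∂zᵢ(z)` onto the positive real axis. The derivative of the composite at `0` is then the real
number `∑ (1 - |zᵢ|²) |∂f/∂zᵢ(z)|`, and the Schwarz–Pick inequality `|g'(0)| ≤ 1 - |g(0)|²`
for self-maps of the disc gives the claim. Schwarz–Pick itself follows from the Schwarz lemma
applied to `φ_{-g(0)} ∘ g`.
-/

/-- The open unit polydisk in `ℂⁿ`. -/
def polydisk (n : ℕ) : Set (Fin n → ℂ) := {z | ∀ i, ‖z i‖ < 1}

open Complex ComplexConjugate Metric Set

noncomputable def mobiusDisk (a w : ℂ) : ℂ := (w + a) / (1 + conj a * w)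

theorem one_sub_norm_sq_pos {u : ℂ} (hu : ‖u‖ < 1) : 0 < 1 - ‖u‖ ^ 2 :=
  sub_pos.2 (pow_lt_one₀ (norm_nonneg u) hu two_ne_zero)

section mobiusDisk

variable {a w : ℂ}

theorem one_add_conj_mul_ne_zero (ha : ‖a‖ < 1) (hw : ‖w‖ ≤ 1) : 1 + conj a * w ≠ 0 := by
  have hlt : ‖conj a * w‖ < 1 := by
    rw [norm_mul, RCLike.norm_conj]
    nlinarith [norm_nonneg a, norm_nonneg w]
  intro h
  rw [show conj a * w = -1 by linear_combination h] at hlt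
  simp at hlt

theorem normSq_one_add_conj_mul_sub_normSq_add (a w : ℂ) :
    normSq (1 + conj a * w) - normSq (w + a) = (1 - normSq a) * (1 - normSq w) := by
  simp only [normSq_apply, add_re, add_im, mul_re, mul_im, conj_re, conj_im, one_re, one_im]
  ring

theorem norm_mobiusDisk_lt_one (ha : ‖a‖ < 1) (hw : ‖w‖ < 1) : ‖mobiusDisk a w‖ < 1 := by
  have hden := one_add_conj_mul_ne_zero ha hw.le
  rw [mobiusDisk, norm_div, div_lt_one (norm_pos_iff.2 hden), ← sq_lt_sq₀ (norm_nonneg _)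
    (norm_nonneg _), ← sub_pos, ← normSq_eq_norm_sq, ← normSq_eq_norm_sq,
    normSq_one_add_conj_mul_sub_normSq_add, normSq_eq_norm_sq, normSq_eq_norm_sq]
  exact mul_pos (one_sub_norm_sq_pos ha) (one_sub_norm_sq_pos hw)

theorem hasDerivAt_mobiusDisk (hden : 1 + conj a * w ≠ 0) :
    HasDerivAt (mobiusDisk a) ((1 - conj a * a) / (1 + conj a * w) ^ 2) w := by
  have hnum : HasDerivAt (fun w => w + a) 1 w := (hasDerivAt_id w).add_const a
  have hden' : HasDerivAt (fun w => 1 + conj a * w) (conj a) w := by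
    simpa using ((hasDerivAt_id w).const_mul (conj a)).const_add 1
  exact (hnum.fun_div hden' hden).congr_deriv (by ring)

theorem differentiableOn_mobiusDisk (ha : ‖a‖ < 1) : DifferentiableOn ℂ (mobiusDisk a) (ball 0 1) :=
  fun _ hw => (hasDerivAt_mobiusDisk (one_add_conj_mul_ne_zero ha
    (mem_ball_zero_iff.1 hw).le)).differentiableAt.differentiableWithinAt

theorem mobiusDisk_neg_self (a : ℂ) : mobiusDisk (-a) a = 0 := by
  simp [mobiusDisk]

end mobiusDisk

theorem norm_deriv_le_one_sub_norm_sq {g : ℂ → ℂ} (hg : DifferentiableOn ℂ g (ball 0 1))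
    (hmaps : MapsTo g (ball 0 1) (ball 0 1)) : ‖deriv g 0‖ ≤ 1 - ‖g 0‖ ^ 2 := by
  set a := g 0
  have ha : ‖a‖ < 1 := mem_ball_zero_iff.1 (hmaps (mem_ball_self one_pos))
  have ha' : ‖-a‖ < 1 := by rwa [norm_neg]
  have hF_maps : MapsTo (mobiusDisk (-a) ∘ g) (ball 0 1)
      (closedBall ((mobiusDisk (-a) ∘ g) 0) 1) := by
    rw [Function.comp_apply, mobiusDisk_neg_self]
    exact fun w hw => mem_closedBall_zero_iff.2
      (norm_mobiusDisk_lt_one ha' (mem_ball_zero_iff.1 (hmaps hw))).le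
  have hschwarz := norm_deriv_le_div_of_mapsTo_ball
    ((differentiableOn_mobiusDisk ha').comp hg hmaps) hF_maps one_pos
  have hden : 1 + conj (-a) * a = ((1 - ‖a‖ ^ 2 : ℝ) : ℂ) := by
    rw [map_neg, neg_mul, conj_mul']; push_cast; ring
  have hpos := one_sub_norm_sq_pos ha
  have hg0 : HasDerivAt g (deriv g 0) 0 :=
    (hg.differentiableAt (ball_mem_nhds 0 one_pos)).hasDerivAt
  have hchain : deriv (mobiusDisk (-a) ∘ g) 0 = deriv g 0 / ((1 - ‖a‖ ^ 2 : ℝ) : ℂ) := by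
    have hnum : 1 - conj (-a) * -a = ((1 - ‖a‖ ^ 2 : ℝ) : ℂ) := by
      rw [map_neg, neg_mul_neg, conj_mul']; push_cast; ring
    have hne : ((1 - ‖a‖ ^ 2 : ℝ) : ℂ) ≠ 0 := by exact_mod_cast hpos.ne'
    rw [((hasDerivAt_mobiusDisk (hden ▸ hne)).comp 0 hg0).deriv, hnum, hden]
    field_simp
  rw [hchain, norm_div, norm_real, Real.norm_of_nonneg hpos.le, div_le_iff₀ hpos] at hschwarz
  simpa using hschwarz

theorem isOpen_polydisk (n : ℕ) : IsOpen (polydisk n) := by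
  have : polydisk n = univ.pi fun _ => ball 0 1 := by ext; simp [polydisk]
  rw [this]
  exact isOpen_set_pi finite_univ fun _ _ => isOpen_ball

theorem mul_mem_ball_zero_one {c ζ : ℂ} (hc : ‖c‖ ≤ 1) (hζ : ζ ∈ ball (0 : ℂ) 1) :
    c * ζ ∈ ball (0 : ℂ) 1 := by
  rw [mem_ball_zero_iff, norm_mul]
  exact mul_lt_one_of_nonneg_of_lt_one_right hc (norm_nonneg ζ) (mem_ball_zero_iff.1 hζ)

noncomputable def polydiskDisc {n : ℕ} (z c : Fin n → ℂ) (ζ : ℂ) : Fin n → ℂ :=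
  fun i => mobiusDisk (z i) (c i * ζ)

section polydiskDisc

variable {n : ℕ} {z c : Fin n → ℂ}

theorem polydiskDisc_zero : polydiskDisc z c 0 = z := by
  ext i; simp [polydiskDisc, mobiusDisk]

theorem mapsTo_polydiskDisc (hz : z ∈ polydisk n) (hc : ∀ i, ‖c i‖ ≤ 1) :
    MapsTo (polydiskDisc z c) (ball 0 1) (polydisk n) := fun _ hζ i =>
  norm_mobiusDisk_lt_one (hz i) (mem_ball_zero_iff.1 (mul_mem_ball_zero_one (hc i) hζ))

theorem differentiableOn_polydiskDisc (hz : z ∈ polydisk n) (hc : ∀ i, ‖c i‖ ≤ 1) :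
    DifferentiableOn ℂ (polydiskDisc z c) (ball 0 1) :=
  differentiableOn_pi.2 fun i => (differentiableOn_mobiusDisk (hz i)).comp
    (differentiableOn_id.const_mul (c i)) fun _ hζ => mul_mem_ball_zero_one (hc i) hζ

theorem hasDerivAt_polydiskDisc_zero :
    HasDerivAt (polydiskDisc z c) (fun i => ((1 - ‖z i‖ ^ 2 : ℝ) : ℂ) * c i) 0 := by
  refine hasDerivAt_pi.2 fun i => ?_
  have hmob := hasDerivAt_mobiusDisk (a := z i) (w := c i * 0) (by simp)
  refine (hmob.comp (0 : ℂ) ((hasDerivAt_id (0 : ℂ)).const_mul (c i))).congr_deriv ?_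
  rw [conj_mul']
  push_cast
  ring

end polydiskDisc

theorem ContinuousLinearMap.apply_eq_sum_smul_apply_single {ι R M : Type*} [Fintype ι]
    [DecidableEq ι] [Semiring R] [TopologicalSpace R] [AddCommMonoid M] [TopologicalSpace M]
    [Module R M] (L : (ι → R) →L[R] M) (v : ι → R) : L v = ∑ i, v i • L (Pi.single i 1) := by
  conv_lhs => rw [← Finset.univ_sum_single v, map_sum]
  refine Finset.sum_congr rfl fun i _ => ?_
  rw [← map_smul, ← Pi.single_smul', smul_eq_mul, mul_one]

theorem Complex.exists_norm_eq_one_mul_eq_norm (w : ℂ) : ∃ c : ℂ, ‖c‖ = 1 ∧ c * w = ‖w‖ := by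
  refine ⟨exp (-arg w * I), by simpa using norm_exp_ofReal_mul_I (-arg w), ?_⟩
  conv_lhs => rw [← norm_mul_exp_arg_mul_I w]
  rw [mul_left_comm, ← exp_add]
  simp

theorem schwarz_lemma_polydisk_general (n : ℕ) (f : (Fin n → ℂ) → ℂ)
    (hf : DifferentiableOn ℂ f (polydisk n))
    (hmap : ∀ z ∈ polydisk n, ‖f z‖ < 1)
    (z : Fin n → ℂ) (hz : z ∈ polydisk n) :
    ∑ i, (1 - ‖z i‖ ^ 2) * ‖fderiv ℂ f z (Pi.single i 1)‖ ≤ 1 - ‖f z‖ ^ 2 := by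
  choose c hc_norm hc using fun i => exists_norm_eq_one_mul_eq_norm (fderiv ℂ f z (Pi.single i 1))
  have hc_le : ∀ i, ‖c i‖ ≤ 1 := fun i => (hc_norm i).le
  have hpick := norm_deriv_le_one_sub_norm_sq (g := f ∘ polydiskDisc z c)
    (hf.comp (differentiableOn_polydiskDisc hz hc_le) (mapsTo_polydiskDisc hz hc_le))
    fun ζ hζ => mem_ball_zero_iff.2 (hmap _ (mapsTo_polydiskDisc hz hc_le hζ))
  have hf_z : HasFDerivAt f (fderiv ℂ f z) (polydiskDisc z c 0) := by
    rw [polydiskDisc_zero]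
    exact (hf.differentiableAt ((isOpen_polydisk n).mem_nhds hz)).hasFDerivAt
  have hderiv : deriv (f ∘ polydiskDisc z c) 0
      = ((∑ i, (1 - ‖z i‖ ^ 2) * ‖fderiv ℂ f z (Pi.single i 1)‖ : ℝ) : ℂ) := by
    rw [(hf_z.comp_hasDerivAt 0 hasDerivAt_polydiskDisc_zero).deriv,
      ContinuousLinearMap.apply_eq_sum_smul_apply_single]
    push_cast
    simp only [smul_eq_mul, mul_assoc, hc]
  have hnonneg : 0 ≤ ∑ i, (1 - ‖z i‖ ^ 2) * ‖fderiv ℂ f z (Pi.single i 1)‖ :=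
    Finset.sum_nonneg fun i _ => mul_nonneg (one_sub_norm_sq_pos (hz i)).le (norm_nonneg _)
  rwa [hderiv, norm_real, Real.norm_of_nonneg hnonneg, Function.comp_apply,
    polydiskDisc_zero] at hpick

/-- Schwarz lemma on the polydisk: if `f : 𝔻ⁿ → 𝔻` is holomorphic, then for every `z ∈ 𝔻ⁿ`,
`∑ i (1 - |z i|²) |∂f/∂zᵢ(z)| ≤ 1 - |f z|²`. -/
theorem schwarz_lemma_polydisk (n : ℕ) (hn : 0 < n) (f : (Fin n → ℂ) → ℂ)
    (hf : DifferentiableOn ℂ f (polydisk n))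
    (hmap : ∀ z ∈ polydisk n, ‖f z‖ < 1)
    (z : Fin n → ℂ) (hz : z ∈ polydisk n) :
    ∑ i, (1 - ‖z i‖ ^ 2) * ‖fderiv ℂ f z (Pi.single i 1)‖ ≤ 1 - ‖f z‖ ^ 2 :=
  schwarz_lemma_polydisk_general n f hf hmap z hz
end

section
/- Let n be a positive integer, let U be an (n+1)×(n+1) complex matrix that is unitary (U* U = I) and symmetric (Uᵗ = U), written in block form U = [[A, B], [C, D]] with A ∈ ℂ (a 1×1 block), B a 1×n row, C an n×1 column, and D an n×n block. For z = (z₁, …, zₙ) ∈ 𝔻ⁿ let E_z denote the n×n diagonal matrix with diagonal entries z₁, …, zₙ, and define f(z) = A + B E_z (I − D E_z)^{-1} C. Then f is a well-defined holomorphic function on 𝔻ⁿ with values in the closed unit disk, and for every z ∈ 𝔻ⁿ one has ∑_{i=1}^{n} (1 − |z_i|²) |∂f/∂z_i (z)| = 1 − |f(z)|². -/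
open Matrix

/-- The `(n+1) × (n+1)` block matrix `[[A, B], [C, D]]` with scalar upper-left corner `A`,
row `B`, column `C` and `n × n` block `D`. -/
def blockU {n : ℕ} (A : ℂ) (B C : Fin n → ℂ) (D : Matrix (Fin n) (Fin n) ℂ) :
    Matrix (Fin 1 ⊕ Fin n) (Fin 1 ⊕ Fin n) ℂ :=
  Matrix.fromBlocks (Matrix.of fun _ _ => A) (Matrix.of fun _ j => B j)
    (Matrix.of fun i _ => C i) D

/-- The transfer function `f(z) = A + B E_z (I - D E_z)⁻¹ C`, where `E_z` is the diagonal
matrix with diagonal entries `z₁, …, zₙ`. -/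
noncomputable def transfer {n : ℕ} (A : ℂ) (B C : Fin n → ℂ)
    (D : Matrix (Fin n) (Fin n) ℂ) (z : Fin n → ℂ) : ℂ :=
  A + B ⬝ᵥ ((Matrix.diagonal z * (1 - D * Matrix.diagonal z)⁻¹).mulVec C)

/-! Write `u(z) = (1 - D E_z)⁻¹ C`. Then `U` maps `(1, E_z u)` to `(f(z), u)`, so unitarity gives
`|f(z)|² + ‖u‖² = 1 + ‖E_z u‖²`, that is `1 - |f(z)|² = ∑ᵢ (1 - |zᵢ|²) |uᵢ|²`; the same isometry
makes `D` a contraction, so `1 - D E_z` is invertible on the polydisk. Differentiating the inverse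
gives `∂f/∂zᵢ = (B (1 + E_z (1 - D E_z)⁻¹ D))ᵢ uᵢ`, and the row vector
`B (1 + E_z (1 - D E_z)⁻¹ D) = B (1 - E_z D)⁻¹` is `u` transposed once `C = B` and `Dᵀ = D`,
which is what symmetry of `U` says. Hence `∂f/∂zᵢ = uᵢ²`. -/

section Isometry

variable {𝕜 m : Type*} [RCLike 𝕜] [Fintype m]

lemma star_dotProduct_self_eq_sum_norm_sq (y : m → 𝕜) :
    star y ⬝ᵥ y = ((∑ j, ‖y j‖ ^ 2 : ℝ) : 𝕜) := by
  push_cast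
  exact Finset.sum_congr rfl fun j _ => RCLike.conj_mul (y j)

lemma sum_norm_sq_mulVec_of_conjTranspose_mul_self [DecidableEq m] {U : Matrix m m 𝕜}
    (hU : Uᴴ * U = 1) (x : m → 𝕜) : ∑ j, ‖(U *ᵥ x) j‖ ^ 2 = ∑ j, ‖x j‖ ^ 2 := by
  have h : star (U *ᵥ x) ⬝ᵥ (U *ᵥ x) = star x ⬝ᵥ x := by
    rw [star_mulVec, dotProduct_mulVec, vecMul_vecMul, hU, vecMul_one]
  rw [star_dotProduct_self_eq_sum_norm_sq, star_dotProduct_self_eq_sum_norm_sq] at h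
  exact_mod_cast h

end Isometry

section Transfer

variable {n : ℕ} {A : ℂ} {B C : Fin n → ℂ} {D : Matrix (Fin n) (Fin n) ℂ} {z : Fin n → ℂ}

lemma blockU_mulVec_sumElim (p : ℂ) (q : Fin n → ℂ) :
    blockU A B C D *ᵥ Sum.elim (fun _ => p) q =
      Sum.elim (fun _ => A * p + B ⬝ᵥ q) (fun i => C i * p + (D *ᵥ q) i) := by
  rw [blockU, fromBlocks_mulVec]
  funext j
  cases j <;> simp [mulVec, dotProduct]

lemma eq_and_transpose_eq_of_blockU_transpose (hsym : (blockU A B C D)ᵀ = blockU A B C D) :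
    C = B ∧ Dᵀ = D := by
  rw [blockU, fromBlocks_transpose, fromBlocks_inj] at hsym
  obtain ⟨-, hB, -, hD⟩ := hsym
  exact ⟨funext fun i => congrFun (congrFun hB 0) i, hD⟩

lemma sum_norm_sq_mulVec_le_of_blockU (hU : (blockU A B C D)ᴴ * blockU A B C D = 1)
    (w : Fin n → ℂ) : ∑ i, ‖(D *ᵥ w) i‖ ^ 2 ≤ ∑ i, ‖w i‖ ^ 2 := by
  have h := sum_norm_sq_mulVec_of_conjTranspose_mul_self hU (Sum.elim (fun _ => 0) w)
  simp only [blockU_mulVec_sumElim, Fintype.sum_sum_type, Sum.elim_inl, Sum.elim_inr,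
    Finset.univ_unique, Finset.sum_singleton, mul_zero, zero_add, norm_zero] at h
  nlinarith [sq_nonneg ‖B ⬝ᵥ w‖]

lemma norm_sq_lt_one_of_mem_polydisk (hz : z ∈ polydisk n) (i : Fin n) : ‖z i‖ ^ 2 < 1 := by
  have := hz i
  nlinarith [norm_nonneg (z i)]

lemma isUnit_one_sub_mul_diagonal (hD : ∀ w, ∑ i, ‖(D *ᵥ w) i‖ ^ 2 ≤ ∑ i, ‖w i‖ ^ 2)
    (hz : z ∈ polydisk n) : IsUnit (1 - D * diagonal z) := by
  rw [isUnit_iff_isUnit_det, isUnit_iff_ne_zero]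
  intro hdet
  obtain ⟨v, hv, hMv⟩ := exists_mulVec_eq_zero_iff.2 hdet
  rw [sub_mulVec, one_mulVec, sub_eq_zero, ← mulVec_mulVec] at hMv
  obtain ⟨i₀, hi₀⟩ := Function.ne_iff.1 hv
  have hshrink : ∑ i, ‖(diagonal z *ᵥ v) i‖ ^ 2 < ∑ i, ‖v i‖ ^ 2 := by
    refine Finset.sum_lt_sum (fun i _ => ?_) ⟨i₀, Finset.mem_univ i₀, ?_⟩ <;>
      simp only [mulVec_diagonal, norm_mul, mul_pow]
    · nlinarith [norm_sq_lt_one_of_mem_polydisk hz i, sq_nonneg ‖v i‖]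
    · nlinarith [norm_sq_lt_one_of_mem_polydisk hz i₀, pow_pos (norm_pos_iff.2 hi₀) 2]
  have := hD (diagonal z *ᵥ v)
  rw [← hMv] at this
  linarith

noncomputable def transferState (C : Fin n → ℂ) (D : Matrix (Fin n) (Fin n) ℂ)
    (z : Fin n → ℂ) : Fin n → ℂ :=
  (1 - D * diagonal z)⁻¹ *ᵥ C

lemma blockU_mulVec_transferState (hM : IsUnit (1 - D * diagonal z)) :
    blockU A B C D *ᵥ Sum.elim (fun _ => 1) (diagonal z *ᵥ transferState C D z) =
      Sum.elim (fun _ => transfer A B C D z) (transferState C D z) := by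
  have hstate : (1 - D * diagonal z) *ᵥ transferState C D z = C := by
    rw [transferState, mulVec_mulVec, mul_nonsing_inv _ ((isUnit_iff_isUnit_det _).1 hM),
      one_mulVec]
  rw [blockU_mulVec_sumElim]
  congr 1
  · simp [transfer, transferState, mulVec_mulVec]
  · -- abstract `u` so that rewriting `C` below does not reach inside it
    set u := transferState C D z
    funext i
    rw [← hstate]
    simp [sub_mulVec, mulVec_mulVec]

lemma one_sub_norm_sq_transfer (hU : (blockU A B C D)ᴴ * blockU A B C D = 1)
    (hM : IsUnit (1 - D * diagonal z)) :
    1 - ‖transfer A B C D z‖ ^ 2 =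
      ∑ i, (1 - ‖z i‖ ^ 2) * ‖transferState C D z i‖ ^ 2 := by
  have h := sum_norm_sq_mulVec_of_conjTranspose_mul_self hU
    (Sum.elim (fun _ => 1) (diagonal z *ᵥ transferState C D z))
  rw [blockU_mulVec_transferState hM] at h
  simp only [Fintype.sum_sum_type, Sum.elim_inl, Sum.elim_inr, Finset.univ_unique,
    Finset.sum_singleton, norm_one, one_pow, mulVec_diagonal, norm_mul, mul_pow] at h
  simp only [sub_mul, one_mul, Finset.sum_sub_distrib]
  linarith

lemma norm_transfer_le_one (hU : (blockU A B C D)ᴴ * blockU A B C D = 1)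
    (hz : z ∈ polydisk n) : ‖transfer A B C D z‖ ≤ 1 := by
  have hM := isUnit_one_sub_mul_diagonal (sum_norm_sq_mulVec_le_of_blockU hU) hz
  have hnonneg : 0 ≤ ∑ i, (1 - ‖z i‖ ^ 2) * ‖transferState C D z i‖ ^ 2 :=
    Finset.sum_nonneg fun i _ =>
      mul_nonneg (sub_nonneg.2 (norm_sq_lt_one_of_mem_polydisk hz i).le) (sq_nonneg _)
  rw [← one_sub_norm_sq_transfer hU hM] at hnonneg
  exact (sq_le_one_iff₀ (norm_nonneg _)).1 (by linarith)

/- The operator norm makes matrices a normed algebra, where `hasFDerivAt_ringInverse` applies.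
The entrywise topology instances are switched off so that continuous linear maps on matrices are
all taken for the (equal) operator-norm topology and compose with that derivative. -/
open scoped Norms.Operator in
attribute [-instance] instTopologicalSpaceMatrix instUniformSpace in
lemma exists_hasFDerivAt_transfer (hM : IsUnit (1 - D * diagonal z)) :
    ∃ L : (Fin n → ℂ) →L[ℂ] ℂ, HasFDerivAt (transfer A B C D) L z ∧
      ∀ v, L v = B ⬝ᵥ ((1 + diagonal z * (1 - D * diagonal z)⁻¹ * D) * diagonal v *
        (1 - D * diagonal z)⁻¹) *ᵥ C := by
  let diagL : (Fin n → ℂ) →L[ℂ] Matrix (Fin n) (Fin n) ℂ :=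
    LinearMap.toContinuousLinearMap (diagonalLinearMap (Fin n) ℂ ℂ)
  let pairL : Matrix (Fin n) (Fin n) ℂ →L[ℂ] ℂ := LinearMap.toContinuousLinearMap
    { toFun := fun X => B ⬝ᵥ X *ᵥ C
      map_add' := fun X Y => by simp only [add_mulVec, dotProduct_add]
      map_smul' := fun c X => by simp only [smul_mulVec, dotProduct_smul, RingHom.id_apply] }
  have hf : transfer A B C D = fun y => A + pairL (diagL y * Ring.inverse (1 - D * diagL y)) := by
    funext y
    simp [transfer, pairL, diagL, nonsing_inv_eq_ringInverse]
  obtain ⟨M, hMz⟩ := hM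
  have hinv : HasFDerivAt Ring.inverse _ (1 - D * diagL z) :=
    hMz ▸ hasFDerivAt_ringInverse (𝕜 := ℂ) M
  have hR := diagL.hasFDerivAt.mul' (hinv.comp z ((diagL.hasFDerivAt.const_mul D).const_sub 1))
  refine ⟨_, hf ▸ (pairL.hasFDerivAt.comp z hR).const_add A, fun v => ?_⟩
  have hdiag : ∀ y, diagL y = diagonal y := fun _ => rfl
  simp only [pairL, hdiag, ContinuousLinearMap.comp_apply, _root_.add_apply,
    _root_.smul_apply, _root_.neg_apply,
    ContinuousLinearMap.mulLeftRight_apply, LinearMap.coe_toContinuousLinearMap',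
    LinearMap.coe_mk, AddHom.coe_mk, Function.comp_apply, smul_eq_mul,
    op_smul_eq_mul, ← Ring.inverse_unit, hMz, nonsing_inv_eq_ringInverse]
  congr 2
  noncomm_ring

lemma differentiableAt_transfer (hM : IsUnit (1 - D * diagonal z)) :
    DifferentiableAt ℂ (transfer A B C D) z :=
  (exists_hasFDerivAt_transfer hM).choose_spec.1.differentiableAt

lemma vecMul_one_add_diagonal_mul_inv_mul (hCB : C = B) (hD : Dᵀ = D)
    (hM : IsUnit (1 - D * diagonal z)) :
    B ᵥ* (1 + diagonal z * (1 - D * diagonal z)⁻¹ * D) = transferState C D z := by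
  set N := (1 - D * diagonal z)⁻¹
  have hN : N * (1 - D * diagonal z) = 1 := nonsing_inv_mul _ ((isUnit_iff_isUnit_det _).1 hM)
  have hleft : (1 + diagonal z * N * D) * (1 - diagonal z * D) = 1 := by
    calc (1 + diagonal z * N * D) * (1 - diagonal z * D)
        = 1 - diagonal z * D + diagonal z * (N * (1 - D * diagonal z)) * D := by noncomm_ring
      _ = 1 := by rw [hN]; noncomm_ring
  have hT : (1 - diagonal z * D)ᵀ = 1 - D * diagonal z := by
    rw [transpose_sub, transpose_one, transpose_mul, hD, diagonal_transpose]
  have hstate : (1 - D * diagonal z) *ᵥ (B ᵥ* (1 + diagonal z * N * D)) = C := by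
    rw [← hT, mulVec_transpose, vecMul_vecMul, hleft, vecMul_one, hCB]
  rw [transferState, ← hstate, mulVec_mulVec, hN, one_mulVec]

lemma fderiv_transfer_apply_single (hCB : C = B) (hD : Dᵀ = D)
    (hM : IsUnit (1 - D * diagonal z)) (i : Fin n) :
    fderiv ℂ (transfer A B C D) z (Pi.single i 1) = transferState C D z i ^ 2 := by
  obtain ⟨L, hL, hLv⟩ := exists_hasFDerivAt_transfer (A := A) (B := B) (C := C) hM
  rw [hL.fderiv, hLv, ← mulVec_mulVec, ← mulVec_mulVec, dotProduct_mulVec,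
    vecMul_one_add_diagonal_mul_inv_mul hCB hD hM, ← transferState]
  simp [dotProduct, mulVec_diagonal, Pi.single_apply, sq]

end Transfer

theorem symmetric_unitary_transfer_is_extremal_general (n : ℕ)
    (A : ℂ) (B C : Fin n → ℂ) (D : Matrix (Fin n) (Fin n) ℂ)
    (hU : (blockU A B C D)ᴴ * blockU A B C D = 1)
    (hsym : (blockU A B C D)ᵀ = blockU A B C D) :
    (∀ z ∈ polydisk n, IsUnit (1 - D * Matrix.diagonal z)) ∧
    DifferentiableOn ℂ (transfer A B C D) (polydisk n) ∧
    (∀ z ∈ polydisk n, ‖transfer A B C D z‖ ≤ 1) ∧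
    (∀ z ∈ polydisk n,
      ∑ i, (1 - ‖z i‖ ^ 2) * ‖fderiv ℂ (transfer A B C D) z (Pi.single i 1)‖ =
        1 - ‖transfer A B C D z‖ ^ 2) := by
  obtain ⟨hCB, hD⟩ := eq_and_transpose_eq_of_blockU_transpose hsym
  have hM : ∀ z ∈ polydisk n, IsUnit (1 - D * diagonal z) :=
    fun z hz => isUnit_one_sub_mul_diagonal (sum_norm_sq_mulVec_le_of_blockU hU) hz
  refine ⟨hM, fun z hz => ?_, fun z hz => norm_transfer_le_one hU hz, fun z hz => ?_⟩
  · exact (differentiableAt_transfer (hM z hz)).differentiableWithinAt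
  · simp_rw [fderiv_transfer_apply_single hCB hD (hM z hz), norm_pow]
    exact (one_sub_norm_sq_transfer hU (hM z hz)).symm

/-- If `U = [[A,B],[C,D]]` is a symmetric unitary, then the transfer function
`f(z) = A + B E_z (I - D E_z)⁻¹ C` is a well-defined holomorphic function on the polydisk
with values in the closed unit disk, and `∑ i (1-|zᵢ|²)|∂f/∂zᵢ(z)| = 1 - |f z|²` everywhere. -/
theorem symmetric_unitary_transfer_is_extremal (n : ℕ) (hn : 0 < n)
    (A : ℂ) (B C : Fin n → ℂ) (D : Matrix (Fin n) (Fin n) ℂ)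
    (hU : (blockU A B C D)ᴴ * blockU A B C D = 1)
    (hsym : (blockU A B C D)ᵀ = blockU A B C D) :
    (∀ z ∈ polydisk n, IsUnit (1 - D * Matrix.diagonal z)) ∧
    DifferentiableOn ℂ (transfer A B C D) (polydisk n) ∧
    (∀ z ∈ polydisk n, ‖transfer A B C D z‖ ≤ 1) ∧
    (∀ z ∈ polydisk n,
      ∑ i, (1 - ‖z i‖ ^ 2) * ‖fderiv ℂ (transfer A B C D) z (Pi.single i 1)‖ =
        1 - ‖transfer A B C D z‖ ^ 2) :=
  symmetric_unitary_transfer_is_extremal_general n A B C D hU hsym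
end

section
/- Let n be a positive integer and let U = [[A, B], [C, D]] be an (n+1)×(n+1) unitary matrix in block form with Uᵗ = U (so in particular Bᵗ = C and Dᵗ = D), and set f(z) = A + B E_z (I − D E_z)^{-1} C for z ∈ 𝔻ⁿ. Then for every z ∈ 𝔻ⁿ, 1 − |f(z)|² = ∑_{i=1}^{n} (1 − |z_i|²) |e_iᵗ (I − D E_z)^{-1} C|², where e_i is the i-th standard basis column vector of ℂⁿ. -/
open Matrix

local notation "cj" => starRingEnd ℂ

/-- Key quadratic identity coming from `Bᴴ B + Dᴴ D = 1`. -/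
lemma aux_DtD {n : ℕ} (B : Fin n → ℂ) (D : Matrix (Fin n) (Fin n) ℂ)
    (f3 : ∀ k j, cj (B k) * B j + ∑ i, cj (D i k) * D i j = if k = j then 1 else 0)
    (u v : Fin n → ℂ) :
    ∑ i, cj ((D *ᵥ u) i) * (D *ᵥ v) i
      = ∑ i, cj (u i) * v i - cj (∑ j, B j * u j) * (∑ j, B j * v j) := by
  have step1 : ∀ i, cj ((D *ᵥ u) i) * (D *ᵥ v) i
      = ∑ k, ∑ j, (cj (D i k) * D i j) * (cj (u k) * v j) := by
    intro i
    simp only [Matrix.mulVec, dotProduct, map_sum, _root_.map_mul, Finset.sum_mul,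
      Finset.mul_sum]
    rw [Finset.sum_comm]
    refine Finset.sum_congr rfl fun k _ => Finset.sum_congr rfl fun j _ => ?_
    ring
  have swap : ∑ i, ∑ k, ∑ j, (cj (D i k) * D i j) * (cj (u k) * v j)
      = ∑ k, ∑ j, ∑ i, (cj (D i k) * D i j) * (cj (u k) * v j) := by
    rw [Finset.sum_comm]
    exact Finset.sum_congr rfl fun k _ => Finset.sum_comm
  have step2 : ∀ k j, (∑ i, cj (D i k) * D i j) * (cj (u k) * v j)
      = (if k = j then cj (u k) * v j else 0) - (cj (B k) * cj (u k)) * (B j * v j) := by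
    intro k j
    have h2 : (∑ i, cj (D i k) * D i j) = (if k = j then 1 else 0) - cj (B k) * B j :=
      eq_sub_of_add_eq' (f3 k j)
    rw [h2, sub_mul]
    split_ifs <;> ring
  calc ∑ i, cj ((D *ᵥ u) i) * (D *ᵥ v) i
      = ∑ k, ∑ j, (∑ i, cj (D i k) * D i j) * (cj (u k) * v j) := by
        simp only [step1]
        rw [swap]
        exact Finset.sum_congr rfl fun k _ => Finset.sum_congr rfl fun j _ =>
          (Finset.sum_mul ..).symm
    _ = ∑ k, ∑ j, ((if k = j then cj (u k) * v j else 0)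
          - (cj (B k) * cj (u k)) * (B j * v j)) :=
        Finset.sum_congr rfl fun k _ => Finset.sum_congr rfl fun j _ => step2 k j
    _ = ∑ i, cj (u i) * v i - cj (∑ j, B j * u j) * (∑ j, B j * v j) := by
        simp only [Finset.sum_sub_distrib, Finset.sum_ite_eq, Finset.mem_univ, if_pos]
        congr 1
        simp only [map_sum, _root_.map_mul, Finset.sum_mul, Finset.mul_sum]
        rw [Finset.sum_comm]

/-- Mixed identity coming from `Āb + Cᴴ D = 0`. -/
lemma aux_CtD {n : ℕ} (A : ℂ) (B C : Fin n → ℂ) (D : Matrix (Fin n) (Fin n) ℂ)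
    (f2 : ∀ j, cj A * B j + ∑ i, cj (C i) * D i j = 0) (w : Fin n → ℂ) :
    ∑ i, cj (C i) * (D *ᵥ w) i = -(cj A * ∑ j, B j * w j) := by
  have : ∑ i, cj (C i) * (D *ᵥ w) i = ∑ j, (∑ i, cj (C i) * D i j) * w j := by
    simp only [Matrix.mulVec, dotProduct, Finset.mul_sum, Finset.sum_mul]
    rw [Finset.sum_comm]
    exact Finset.sum_congr rfl fun j _ => Finset.sum_congr rfl fun i _ => by ring
  rw [this, Finset.mul_sum, ← Finset.sum_neg_distrib]
  refine Finset.sum_congr rfl fun j _ => ?_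
  have h2 : (∑ i, cj (C i) * D i j) = -(cj A * B j) := by
    have := f2 j; linear_combination this
  rw [h2]; ring

/-- The core algebraic identity, in fully scalar form. -/
lemma aux_key {n : ℕ} (A : ℂ) (B C z h : Fin n → ℂ) (D : Matrix (Fin n) (Fin n) ℂ)
    (f1 : cj A * A + ∑ i, cj (C i) * C i = 1)
    (f2 : ∀ j, cj A * B j + ∑ i, cj (C i) * D i j = 0)
    (f3 : ∀ k j, cj (B k) * B j + ∑ i, cj (D i k) * D i j = if k = j then 1 else 0)
    (hrec : ∀ i, h i = C i + (D *ᵥ (fun j => z j * h j)) i) :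
    1 - cj (A + ∑ j, B j * (z j * h j)) * (A + ∑ j, B j * (z j * h j))
      = ∑ i, (1 - cj (z i) * z i) * (cj (h i) * h i) := by
  set w : Fin n → ℂ := fun j => z j * h j with hw
  set s : ℂ := ∑ j, B j * (z j * h j) with hs
  have hsw : s = ∑ j, B j * w j := rfl
  have hsplit : ∀ i, cj (h i) * h i
      = cj (C i) * C i + cj (C i) * (D *ᵥ w) i + cj ((D *ᵥ w) i) * C i
        + cj ((D *ᵥ w) i) * (D *ᵥ w) i := by
    intro i
    rw [hrec i, map_add]
    ring
  have t1 : ∑ i, cj (C i) * C i = 1 - cj A * A := eq_sub_of_add_eq' f1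
  have t2 : ∑ i, cj (C i) * (D *ᵥ w) i = -(cj A * s) := by
    rw [hsw]; exact aux_CtD A B C D f2 w
  have t3 : ∑ i, cj ((D *ᵥ w) i) * C i = -(A * cj s) := by
    have e1 : ∑ i, cj ((D *ᵥ w) i) * C i = cj (∑ i, cj (C i) * (D *ᵥ w) i) := by
      rw [map_sum]
      refine Finset.sum_congr rfl fun i _ => ?_
      rw [_root_.map_mul, Complex.conj_conj]
      ring
    rw [e1, t2, map_neg, _root_.map_mul, Complex.conj_conj]
  have t4 : ∑ i, cj ((D *ᵥ w) i) * (D *ᵥ w) i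
      = ∑ i, cj (w i) * w i - cj s * s := by
    rw [hsw]; exact aux_DtD B D f3 w w
  have hsum : ∑ i, cj (h i) * h i
      = (1 - cj A * A) + (-(cj A * s)) + (-(A * cj s))
        + (∑ i, cj (w i) * w i - cj s * s) := by
    calc ∑ i, cj (h i) * h i
        = ∑ i, (cj (C i) * C i + cj (C i) * (D *ᵥ w) i + cj ((D *ᵥ w) i) * C i
            + cj ((D *ᵥ w) i) * (D *ᵥ w) i) :=
          Finset.sum_congr rfl fun i _ => hsplit i
      _ = (∑ i, cj (C i) * C i) + (∑ i, cj (C i) * (D *ᵥ w) i)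
            + (∑ i, cj ((D *ᵥ w) i) * C i) + ∑ i, cj ((D *ᵥ w) i) * (D *ᵥ w) i := by
          simp only [Finset.sum_add_distrib]
      _ = _ := by rw [t1, t2, t3, t4]
  have hRHS : ∑ i, (1 - cj (z i) * z i) * (cj (h i) * h i)
      = ∑ i, cj (h i) * h i - ∑ i, cj (w i) * w i := by
    rw [← Finset.sum_sub_distrib]
    refine Finset.sum_congr rfl fun i _ => ?_
    have : cj (w i) * w i = (cj (z i) * z i) * (cj (h i) * h i) := by
      have : w i = z i * h i := rfl
      rw [this, _root_.map_mul]; ring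
    rw [this]; ring
  rw [hRHS, hsum, map_add]
  ring

/-- For a symmetric unitary `U = [[A,B],[C,D]]` and `f(z) = A + B E_z (I - D E_z)⁻¹ C`,
one has `1 - |f z|² = ∑ i (1 - |zᵢ|²) |eᵢᵗ (I - D E_z)⁻¹ C|²` on the polydisk. -/
theorem symmetric_transfer_norm_sum (n : ℕ) (hn : 0 < n)
    (A : ℂ) (B C : Fin n → ℂ) (D : Matrix (Fin n) (Fin n) ℂ)
    (hU : (blockU A B C D)ᴴ * blockU A B C D = 1)
    (hsym : (blockU A B C D)ᵀ = blockU A B C D)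
    (z : Fin n → ℂ) (hz : z ∈ polydisk n) :
    1 - ‖transfer A B C D z‖ ^ 2 =
      ∑ i, (1 - ‖z i‖ ^ 2) * ‖((1 - D * Matrix.diagonal z)⁻¹.mulVec C) i‖ ^ 2 := by
  classical
  -- unitarity facts, entrywise
  have f1 : cj A * A + ∑ i, cj (C i) * C i = 1 := by
    have e := congrFun (congrFun hU (Sum.inl 0)) (Sum.inl 0)
    simpa [Matrix.mul_apply, Matrix.conjTranspose_apply, blockU, Fintype.sum_sum_type,
      Matrix.one_apply, Complex.star_def] using e
  have f2 : ∀ j, cj A * B j + ∑ i, cj (C i) * D i j = 0 := by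
    intro j
    have e := congrFun (congrFun hU (Sum.inl 0)) (Sum.inr j)
    simpa [Matrix.mul_apply, Matrix.conjTranspose_apply, blockU, Fintype.sum_sum_type,
      Matrix.one_apply, Complex.star_def] using e
  have f3 : ∀ k j, cj (B k) * B j + ∑ i, cj (D i k) * D i j = if k = j then 1 else 0 := by
    intro k j
    have e := congrFun (congrFun hU (Sum.inr k)) (Sum.inr j)
    simpa [Matrix.mul_apply, Matrix.conjTranspose_apply, blockU, Fintype.sum_sum_type,
      Matrix.one_apply, Complex.star_def, Sum.inr.injEq] using e
  have hsq : ∀ x : ℂ, cj x * x = ((‖x‖ ^ 2 : ℝ) : ℂ) := by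
    intro x
    rw [mul_comm, Complex.mul_conj']
    push_cast
    ring
  -- the matrix `M = 1 - D E_z` is invertible
  set M : Matrix (Fin n) (Fin n) ℂ := 1 - D * Matrix.diagonal z with hM
  have hcontr : ∀ u : Fin n → ℂ,
      ∑ i, ‖(D *ᵥ u) i‖ ^ 2 = ∑ i, ‖u i‖ ^ 2 - ‖∑ j, B j * u j‖ ^ 2 := by
    intro u
    have e := aux_DtD B D f3 u u
    simp only [hsq] at e
    push_cast at e
    exact_mod_cast e
  have hker : ∀ v : Fin n → ℂ, M *ᵥ v = 0 → v = 0 := by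
    intro v hv
    by_contra hne
    obtain ⟨i0, hi0⟩ := Function.ne_iff.mp hne
    have hveq : v = D *ᵥ (fun i => z i * v i) := by
      have h1 : M *ᵥ v = v - (D * Matrix.diagonal z) *ᵥ v := by
        rw [hM, Matrix.sub_mulVec, Matrix.one_mulVec]
      have hd : Matrix.diagonal z *ᵥ v = fun i => z i * v i :=
        funext fun i => Matrix.mulVec_diagonal z v i
      have h2 : (D * Matrix.diagonal z) *ᵥ v = D *ᵥ (fun i => z i * v i) := by
        rw [← Matrix.mulVec_mulVec, hd]
      have h3 : v - D *ᵥ (fun i => z i * v i) = 0 := by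
        rw [← h2, ← h1, hv]
      linear_combination (norm := module) h3
    have h1 : ∑ i, ‖v i‖ ^ 2 ≤ ∑ i, ‖z i * v i‖ ^ 2 := by
      conv_lhs => rw [hveq]
      rw [hcontr]
      have : (0:ℝ) ≤ ‖∑ j, B j * z j * v j‖ ^ 2 := by positivity
      simp only [mul_assoc] at *
      linarith
    have h2 : ∑ i, ‖z i * v i‖ ^ 2 < ∑ i, ‖v i‖ ^ 2 := by
      refine Finset.sum_lt_sum (fun i _ => ?_) ⟨i0, Finset.mem_univ i0, ?_⟩
      · rw [norm_mul, mul_pow]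
        have hz1 : ‖z i‖ ≤ 1 := le_of_lt (hz i)
        have hz2 : ‖z i‖ ^ 2 ≤ 1 := by nlinarith [norm_nonneg (z i)]
        calc ‖z i‖ ^ 2 * ‖v i‖ ^ 2 ≤ 1 * ‖v i‖ ^ 2 :=
              mul_le_mul_of_nonneg_right hz2 (sq_nonneg _)
          _ = ‖v i‖ ^ 2 := one_mul _
      · rw [norm_mul, mul_pow]
        have hz1 : ‖z i0‖ < 1 := hz i0
        have hv0 : 0 < ‖v i0‖ := norm_pos_iff.mpr (by simpa using hi0)
        have hz2 : ‖z i0‖ ^ 2 < 1 := by nlinarith [norm_nonneg (z i0)]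
        calc ‖z i0‖ ^ 2 * ‖v i0‖ ^ 2 < 1 * ‖v i0‖ ^ 2 :=
              mul_lt_mul_of_pos_right hz2 (pow_pos hv0 2)
          _ = ‖v i0‖ ^ 2 := one_mul _
    linarith
  have hinj : Function.Injective M.mulVec := by
    intro a b hab
    have h0 : M *ᵥ (a - b) = 0 := by rw [Matrix.mulVec_sub, hab, sub_self]
    exact sub_eq_zero.mp (hker _ h0)
  have hunit : IsUnit M := Matrix.mulVec_injective_iff_isUnit.mp hinj
  set h : Fin n → ℂ := M⁻¹ *ᵥ C with hh
  have hMh : M *ᵥ h = C := by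
    rw [hh, Matrix.mulVec_mulVec, Matrix.mul_nonsing_inv _ ((Matrix.isUnit_iff_isUnit_det M).mp hunit),
      Matrix.one_mulVec]
  have hrec : ∀ i, h i = C i + (D *ᵥ (fun j => z j * h j)) i := by
    intro i
    have h1 : M *ᵥ h = h - D *ᵥ (fun j => z j * h j) := by
      have hd : Matrix.diagonal z *ᵥ h = fun j => z j * h j :=
        funext fun j => Matrix.mulVec_diagonal z h j
      rw [hM, Matrix.sub_mulVec, Matrix.one_mulVec, ← Matrix.mulVec_mulVec, hd]
    have := congrFun hMh i
    rw [h1] at this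
    simp only [Pi.sub_apply] at this
    linear_combination this
  have hT : transfer A B C D z = A + ∑ j, B j * (z j * h j) := by
    unfold transfer
    rw [← hM, ← Matrix.mulVec_mulVec, ← hh]
    congr 1
    rw [dotProduct]
    refine Finset.sum_congr rfl fun j _ => ?_
    rw [Matrix.mulVec_diagonal]
  have key := aux_key A B C z h D f1 f2 f3 hrec
  simp only [hsq] at key
  rw [hT]
  have keyR : ((1 - ‖A + ∑ j, B j * (z j * h j)‖ ^ 2 : ℝ) : ℂ)
      = ((∑ i, (1 - ‖z i‖ ^ 2) * ‖h i‖ ^ 2 : ℝ) : ℂ) := by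
    push_cast at key ⊢
    exact key
  exact_mod_cast keyR
end

section
/- Let f : 𝔻² → 𝔻 be holomorphic with extreme set X(f). If there is a point P ∈ X(f) at which ∂f/∂z (P) = 0 or ∂f/∂w (P) = 0, then f depends on only one variable (i.e., one of the two partial derivatives of f vanishes identically on 𝔻²) and X(f) = 𝔻². -/
/-- The open unit bidisk in `ℂ²`. -/
def bidisk : Set (ℂ × ℂ) := {p | ‖p.1‖ < 1 ∧ ‖p.2‖ < 1}

/-- The Möbius map `ζ ↦ λ (ζ - a) / (1 - conj a ⬝ ζ)`. -/
noncomputable def mobius (l a : ℂ) (z : ℂ) : ℂ :=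
  l * (z - a) / (1 - (starRingEnd ℂ) a * z)

/-- `φ` is an automorphism of the unit disk: on the disk it agrees with a Möbius map
`ζ ↦ λ (ζ - a)/(1 - conj a ⬝ ζ)` with `|λ| = 1` and `|a| < 1`. -/
def IsDiskAut (φ : ℂ → ℂ) : Prop :=
  ∃ l a : ℂ, ‖l‖ = 1 ∧ ‖a‖ < 1 ∧ ∀ z : ℂ, ‖z‖ < 1 → φ z = mobius l a z

/-- A balanced disk in the bidisk: the image of the unit disk under `ζ ↦ (φ₁ ζ, φ₂ ζ)` for
automorphisms `φ₁, φ₂` of the disk. -/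
def IsBalancedDisk (D : Set (ℂ × ℂ)) : Prop :=
  ∃ φ₁ φ₂ : ℂ → ℂ, IsDiskAut φ₁ ∧ IsDiskAut φ₂ ∧
    D = {p : ℂ × ℂ | ∃ ζ : ℂ, ‖ζ‖ < 1 ∧ p = (φ₁ ζ, φ₂ ζ)}

/-- An extreme disk for `f`: a balanced disk on which the restriction of `f` is an
automorphism of the disk. -/
def IsExtremeDisk (f : ℂ × ℂ → ℂ) (D : Set (ℂ × ℂ)) : Prop :=
  ∃ φ₁ φ₂ : ℂ → ℂ, IsDiskAut φ₁ ∧ IsDiskAut φ₂ ∧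
    D = {p : ℂ × ℂ | ∃ ζ : ℂ, ‖ζ‖ < 1 ∧ p = (φ₁ ζ, φ₂ ζ)} ∧
    IsDiskAut (fun ζ => f (φ₁ ζ, φ₂ ζ))

/-- The extreme set `X(f)` of `f : 𝔻² → 𝔻`: the points of the bidisk at which
`1 - |f(z,w)|² = (1 - |z|²)|f₁(z,w)| + (1 - |w|²)|f₂(z,w)|`. -/
def extremeSet (f : ℂ × ℂ → ℂ) : Set (ℂ × ℂ) :=
  {p ∈ bidisk | 1 - ‖f p‖ ^ 2 =
    (1 - ‖p.1‖ ^ 2) * ‖fderiv ℂ f p (1, 0)‖ + (1 - ‖p.2‖ ^ 2) * ‖fderiv ℂ f p (0, 1)‖}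

open Complex Metric Set


lemma key_identity (a w : ℂ) :
    ‖1 - (starRingEnd ℂ) a * w‖^2 - ‖w - a‖^2 = (1-‖a‖^2)*(1-‖w‖^2) := by
  have e : ∀ z : ℂ, (‖z‖^2 : ℝ) = Complex.normSq z := fun z => by
    rw [Complex.sq_norm]
  rw [e, e, e, e]
  have : (Complex.normSq (1 - (starRingEnd ℂ) a * w) : ℂ) - Complex.normSq (w - a)
      = (1 - (Complex.normSq a : ℂ)) * (1 - (Complex.normSq w : ℂ)) := by
    rw [← Complex.mul_conj, ← Complex.mul_conj, ← Complex.mul_conj, ← Complex.mul_conj]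
    simp only [map_sub, map_mul, map_one, Complex.conj_conj]
    ring
  exact_mod_cast this

lemma denom_ne_zero {a w : ℂ} (h : ‖a‖ * ‖w‖ < 1) : (1 : ℂ) - (starRingEnd ℂ) a * w ≠ 0 := by
  intro heq
  have h1 : (1:ℂ) = (starRingEnd ℂ) a * w := by
    have := sub_eq_zero.mp heq; exact this
  have h2 : (1:ℝ) = ‖a‖ * ‖w‖ := by
    calc (1:ℝ) = ‖(1:ℂ)‖ := by simp
    _ = ‖(starRingEnd ℂ) a * w‖ := by rw [← h1]
    _ = ‖a‖ * ‖w‖ := by rw [norm_mul, RCLike.norm_conj]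
  linarith

lemma one_sub_sq_mobius {l a w : ℂ} (hl : ‖l‖ = 1) (ha : ‖a‖ < 1) (hw : ‖w‖ < 1) :
    1 - ‖mobius l a w‖^2 = ((1-‖a‖^2)*(1-‖w‖^2))/‖1 - (starRingEnd ℂ) a * w‖^2 := by
  have hd : (1 : ℂ) - (starRingEnd ℂ) a * w ≠ 0 := by
    refine denom_ne_zero ?_
    nlinarith [norm_nonneg a, norm_nonneg w]
  have hdn : ‖(1 : ℂ) - (starRingEnd ℂ) a * w‖ ≠ 0 := norm_ne_zero_iff.mpr hd
  have hdn2 : ‖(1 : ℂ) - (starRingEnd ℂ) a * w‖^2 ≠ 0 := pow_ne_zero _ hdn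
  have : ‖mobius l a w‖^2 = ‖w - a‖^2 / ‖1 - (starRingEnd ℂ) a * w‖^2 := by
    rw [mobius, norm_div, norm_mul, hl, one_mul, div_pow]
  rw [this, eq_div_iff hdn2, sub_mul, div_mul_cancel₀ _ hdn2, one_mul, key_identity]

lemma mobius_lt_one {l a w : ℂ} (hl : ‖l‖ = 1) (ha : ‖a‖ < 1) (hw : ‖w‖ < 1) :
    ‖mobius l a w‖ < 1 := by
  have h := one_sub_sq_mobius hl ha hw
  have hpos : 0 < ((1-‖a‖^2)*(1-‖w‖^2))/‖1 - (starRingEnd ℂ) a * w‖^2 := by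
    have hd : (1 : ℂ) - (starRingEnd ℂ) a * w ≠ 0 := by
      refine denom_ne_zero ?_
      nlinarith [norm_nonneg a, norm_nonneg w]
    have : 0 < ‖(1 : ℂ) - (starRingEnd ℂ) a * w‖ := norm_pos_iff.mpr hd
    have h1 : (0:ℝ) < 1-‖a‖^2 := by nlinarith [norm_nonneg a]
    have h2 : (0:ℝ) < 1-‖w‖^2 := by nlinarith [norm_nonneg w]
    positivity
  nlinarith [norm_nonneg (mobius l a w)]

lemma mobius_hasDerivAt {l a : ℂ} (w : ℂ) (h : (1 : ℂ) - (starRingEnd ℂ) a * w ≠ 0) :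
    HasDerivAt (mobius l a) (l * (1 - (starRingEnd ℂ) a * a) / (1 - (starRingEnd ℂ) a * w)^2) w := by
  have hn : HasDerivAt (fun z : ℂ => l * (z - a)) l w := by
    simpa using (((hasDerivAt_id w).sub_const a).const_mul l)
  have hdd : HasDerivAt (fun z : ℂ => 1 - (starRingEnd ℂ) a * z) (-(starRingEnd ℂ) a) w := by
    simpa using ((hasDerivAt_id w).const_mul ((starRingEnd ℂ) a)).const_sub 1
  have := hn.div hdd h
  refine this.congr_deriv ?_
  ring

lemma norm_mobius_deriv {l a w : ℂ} (hl : ‖l‖ = 1) (ha : ‖a‖ < 1) :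
    ‖l * (1 - (starRingEnd ℂ) a * a) / (1 - (starRingEnd ℂ) a * w)^2‖
      = (1 - ‖a‖^2) / ‖1 - (starRingEnd ℂ) a * w‖^2 := by
  have h1 : (1 : ℂ) - (starRingEnd ℂ) a * a = ((1 - ‖a‖^2 : ℝ) : ℂ) := by
    rw [Complex.conj_mul']
    push_cast
    rfl
  rw [norm_div, norm_mul, hl, one_mul, h1, norm_pow, Complex.norm_real]
  rw [Real.norm_eq_abs, _root_.abs_of_nonneg (by nlinarith [norm_nonneg a] : (0:ℝ) ≤ 1 - ‖a‖^2)]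

/-- The Möbius invariance identity combining value and derivative. -/
lemma mobius_invariance {l a w : ℂ} (hl : ‖l‖ = 1) (ha : ‖a‖ < 1) (hw : ‖w‖ < 1) :
    1 - ‖mobius l a w‖^2
      = (1 - ‖w‖^2) * ((1 - ‖a‖^2) / ‖1 - (starRingEnd ℂ) a * w‖^2) := by
  rw [one_sub_sq_mobius hl ha hw]; ring

lemma mobius_inv_left {a : ℂ} (ha : ‖a‖ < 1) {w : ℂ} (hw : ‖w‖ < 1) :
    mobius 1 (-a) (mobius 1 a w) = w := by
  have h1 : (1 : ℂ) - (starRingEnd ℂ) a * w ≠ 0 :=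
    denom_ne_zero (by nlinarith [norm_nonneg a, norm_nonneg w])
  have h2 : (1 : ℂ) - (starRingEnd ℂ) a * a ≠ 0 :=
    denom_ne_zero (by nlinarith [norm_nonneg a])
  rw [mobius, mobius]
  rw [map_neg, neg_mul, sub_neg_eq_add, sub_neg_eq_add]
  have hden : 1 + (starRingEnd ℂ) a * (1 * (w - a) / (1 - (starRingEnd ℂ) a * w))
      = (1 - (starRingEnd ℂ) a * a) / (1 - (starRingEnd ℂ) a * w) := by
    field_simp
    ring
  have hnum : 1 * (1 * (w - a) / (1 - (starRingEnd ℂ) a * w) + a)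
      = w * ((1 - (starRingEnd ℂ) a * a) / (1 - (starRingEnd ℂ) a * w)) := by
    rw [one_mul, one_mul, div_add' _ _ _ h1, mul_div_assoc']
    congr 1
    ring
  rw [hden, hnum, mul_div_assoc, div_self (div_ne_zero h2 h1), mul_one]

lemma mobius_inv_right {a : ℂ} (ha : ‖a‖ < 1) {w : ℂ} (hw : ‖w‖ < 1) :
    mobius 1 a (mobius 1 (-a) w) = w := by
  have := mobius_inv_left (a := -a) (by simpa using ha) hw
  simpa using this

lemma mobius_zero_left {a : ℂ} : mobius 1 (-a) 0 = a := by
  simp [mobius]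

lemma mobius_self {a : ℂ} (ha : ‖a‖ < 1) : mobius 1 a a = 0 := by
  simp [mobius]

lemma mobius_differentiableAt {l a w : ℂ} (h : (1 : ℂ) - (starRingEnd ℂ) a * w ≠ 0) :
    DifferentiableAt ℂ (mobius l a) w := (mobius_hasDerivAt w h).differentiableAt

lemma denom_ne_zero' {a w : ℂ} (ha : ‖a‖ < 1) (hw : ‖w‖ ≤ 1) :
    (1 : ℂ) - (starRingEnd ℂ) a * w ≠ 0 :=
  denom_ne_zero (by nlinarith [norm_nonneg a, norm_nonneg w])

/-- Schwarz–Pick inequality for self-maps of the unit disk. -/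
lemma schwarz_pick {F : ℂ → ℂ} (hF : DifferentiableOn ℂ F (ball 0 1))
    (hm : ∀ z ∈ ball (0:ℂ) 1, ‖F z‖ < 1) {z₀ z : ℂ} (h0 : ‖z₀‖ < 1) (hz : ‖z‖ < 1) :
    ‖mobius 1 (F z₀) (F z)‖ ≤ ‖mobius 1 z₀ z‖ := by
  have hz₀b : z₀ ∈ ball (0:ℂ) 1 := by simpa [mem_ball, dist_eq_norm] using h0
  have hFz₀ : ‖F z₀‖ < 1 := hm z₀ hz₀b
  set H : ℂ → ℂ := fun ζ => mobius 1 (F z₀) (F (mobius 1 (-z₀) ζ)) with hH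
  have hball : ∀ ζ : ℂ, ζ ∈ ball (0:ℂ) 1 → ‖ζ‖ < 1 := by
    intro ζ h; simpa [mem_ball, dist_eq_norm] using h
  have hmem : ∀ ζ : ℂ, ‖ζ‖ < 1 → ζ ∈ ball (0:ℂ) 1 := by
    intro ζ h; simpa [mem_ball, dist_eq_norm] using h
  have hin : ∀ ζ ∈ ball (0:ℂ) 1, ‖mobius 1 (-z₀) ζ‖ < 1 := fun ζ h =>
    mobius_lt_one (by simp) (by simpa using h0) (hball ζ h)
  have hd : DifferentiableOn ℂ H (ball 0 1) := by
    intro ζ hζ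
    have h1 : DifferentiableAt ℂ (mobius 1 (-z₀)) ζ :=
      mobius_differentiableAt (denom_ne_zero' (by simpa using h0) (hball ζ hζ).le)
    have h2 : DifferentiableAt ℂ F (mobius 1 (-z₀) ζ) :=
      hF.differentiableAt (isOpen_ball.mem_nhds (hmem _ (hin ζ hζ)))
    have h3 : DifferentiableAt ℂ (mobius 1 (F z₀)) (F (mobius 1 (-z₀) ζ)) :=
      mobius_differentiableAt (denom_ne_zero' hFz₀ (hm _ (hmem _ (hin ζ hζ))).le)
    exact ((h3.comp _ h2).comp ζ h1).differentiableWithinAt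
  have hmaps : MapsTo H (ball 0 1) (ball (H 0) 1) := by
    have hH0 : H 0 = 0 := by
      rw [hH]; simp only []
      rw [mobius_zero_left, mobius_self hFz₀]
    intro ζ hζ
    rw [hH0]
    exact hmem _ (mobius_lt_one (by simp) hFz₀ (hm _ (hmem _ (hin ζ hζ))))
  have key := Complex.dist_le_div_mul_dist_of_mapsTo_ball hd (hmaps.mono_right ball_subset_closedBall)
    (z := mobius 1 z₀ z) (hmem _ (mobius_lt_one (by simp) h0 hz))
  have hH0 : H 0 = 0 := by
    rw [hH]; simp only []
    rw [mobius_zero_left, mobius_self hFz₀]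
  have hHval : H (mobius 1 z₀ z) = mobius 1 (F z₀) (F z) := by
    rw [hH]; simp only []
    rw [mobius_inv_left h0 hz]
  rw [hHval, hH0, dist_zero_right, dist_zero_right] at key
  simpa using key

/-- Maximum principle: a holomorphic function on the disk vanishing at the boundary. -/
lemma vanish_of_boundary_decay {D : ℂ → ℂ} (hd : DifferentiableOn ℂ D (ball 0 1)) {K : ℝ}
    (hK : 0 ≤ K) (hb : ∀ w : ℂ, ‖w‖ < 1 → ‖D w‖ ≤ K * (1 - ‖w‖)) :
    ∀ w : ℂ, ‖w‖ < 1 → D w = 0 := by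
  intro w hw
  have key : ∀ r : ℝ, ‖w‖ < r → r < 1 → ‖D w‖ ≤ K * (1 - r) := by
    intro r h1 h2
    have hr0 : 0 < r := lt_of_le_of_lt (norm_nonneg w) h1
    have hcl : closure (ball (0:ℂ) r) = closedBall 0 r := closure_ball 0 hr0.ne'
    have hsub : closedBall (0:ℂ) r ⊆ ball 0 1 := by
      intro x hx
      rw [mem_closedBall, dist_zero_right] at hx
      rw [mem_ball, dist_zero_right]
      exact lt_of_le_of_lt hx h2
    have hdc : DiffContOnCl ℂ D (ball 0 r) := by
      apply DifferentiableOn.diffContOnCl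
      rw [hcl]
      exact hd.mono hsub
    have hfr : ∀ x ∈ frontier (ball (0:ℂ) r), ‖D x‖ ≤ K * (1 - r) := by
      intro x hx
      rw [frontier_ball 0 hr0.ne'] at hx
      have hxr : ‖x‖ = r := by simpa [dist_zero_right] using hx
      have := hb x (by rw [hxr]; exact h2)
      rwa [hxr] at this
    have hwcl : w ∈ closure (ball (0:ℂ) r) := by
      rw [hcl]
      exact mem_closedBall.mpr (by simpa [dist_zero_right] using h1.le)
    exact Complex.norm_le_of_forall_mem_frontier_norm_le isBounded_ball hdc hfr hwcl
  have hle : ‖D w‖ ≤ 0 := by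
    by_contra hc
    push_neg at hc
    set e := ‖D w‖ with he
    set r : ℝ := max ((‖w‖ + 1)/2) (1 - e/(2*(K+1))) with hr
    have hr1 : r < 1 := by
      apply max_lt
      · linarith
      · have : 0 < e/(2*(K+1)) := by positivity
        linarith
    have hrw : ‖w‖ < r := lt_of_lt_of_le (by linarith) (le_max_left _ _)
    have h3 := key r hrw hr1
    have h4 : 1 - r ≤ e/(2*(K+1)) := by
      have := le_max_right ((‖w‖ + 1)/2) (1 - e/(2*(K+1)))
      linarith
    have h5 : K * (1 - r) ≤ K * (e/(2*(K+1))) :=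
      mul_le_mul_of_nonneg_left h4 hK
    have h6 : K * (e/(2*(K+1))) < e := by
      rw [mul_div_assoc', div_lt_iff₀ (by linarith)]
      nlinarith
    linarith
  exact norm_le_zero_iff.mp hle


lemma isOpen_bidisk : IsOpen bidisk := by
  have : bidisk = (fun p : ℂ × ℂ => p.1) ⁻¹' (ball 0 1) ∩ (fun p : ℂ × ℂ => p.2) ⁻¹' (ball 0 1) := by
    ext p
    simp [bidisk, mem_ball, dist_zero_right]
  rw [this]
  exact (isOpen_ball.preimage continuous_fst).inter (isOpen_ball.preimage continuous_snd)

lemma one_sub_conj_self (a : ℂ) : (1 : ℂ) - (starRingEnd ℂ) a * a = ((1 - ‖a‖^2 : ℝ) : ℂ) := by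
  rw [Complex.conj_mul']
  push_cast
  rfl

lemma norm_one_sub_conj_self {a : ℂ} (ha : ‖a‖ ≤ 1) : ‖(1:ℂ) - (starRingEnd ℂ) a * a‖ = 1 - ‖a‖^2 := by
  rw [one_sub_conj_self, Complex.norm_real, Real.norm_eq_abs,
    _root_.abs_of_nonneg (by nlinarith [norm_nonneg a] : (0:ℝ) ≤ 1 - ‖a‖^2)]

lemma slice2_hasDerivAt (f : ℂ × ℂ → ℂ) (hf : DifferentiableOn ℂ f bidisk) {z w : ℂ}
    (hz : ‖z‖ < 1) (hw : ‖w‖ < 1) :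
    HasDerivAt (fun w' => f (z, w')) (fderiv ℂ f (z, w) (0, 1)) w := by
  have hp : (z, w) ∈ bidisk := ⟨hz, hw⟩
  have hdf : HasFDerivAt f (fderiv ℂ f (z, w)) (z, w) :=
    (hf.differentiableAt (isOpen_bidisk.mem_nhds hp)).hasFDerivAt
  have hin : HasDerivAt (fun w' : ℂ => (z, w')) (((0:ℂ), (1:ℂ)) : ℂ × ℂ) w :=
    HasDerivAt.prodMk (hasDerivAt_const w z) (hasDerivAt_id w)
  exact hdf.comp_hasDerivAt w hin

lemma slice1_hasDerivAt (f : ℂ × ℂ → ℂ) (hf : DifferentiableOn ℂ f bidisk) {z w : ℂ}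
    (hz : ‖z‖ < 1) (hw : ‖w‖ < 1) :
    HasDerivAt (fun z' => f (z', w)) (fderiv ℂ f (z, w) (1, 0)) z := by
  have hp : (z, w) ∈ bidisk := ⟨hz, hw⟩
  have hdf : HasFDerivAt f (fderiv ℂ f (z, w)) (z, w) :=
    (hf.differentiableAt (isOpen_bidisk.mem_nhds hp)).hasFDerivAt
  have hin : HasDerivAt (fun z' : ℂ => (z', w)) (((1:ℂ), (0:ℂ)) : ℂ × ℂ) z :=
    HasDerivAt.prodMk (hasDerivAt_id z) (hasDerivAt_const z w)
  exact hdf.comp_hasDerivAt z hin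

lemma mobius_decay {a w : ℂ} (ha : ‖a‖ < 1) (hw : ‖w‖ < 1) :
    (1-‖a‖^2)/‖(1:ℂ) - (starRingEnd ℂ) a * w‖^2 ≤ (1-‖a‖^2)/(1-‖a‖)^2 := by
  have hd : (0:ℝ) < 1 - ‖a‖ := by linarith
  have hge : 1 - ‖a‖ ≤ ‖(1:ℂ) - (starRingEnd ℂ) a * w‖ := by
    have h := norm_sub_norm_le (1:ℂ) ((starRingEnd ℂ) a * w)
    rw [norm_one, norm_mul, RCLike.norm_conj] at h
    nlinarith [norm_nonneg a, norm_nonneg w]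
  have h2 : (1-‖a‖)^2 ≤ ‖(1:ℂ) - (starRingEnd ℂ) a * w‖^2 := by nlinarith
  exact div_le_div_of_nonneg_left (by nlinarith [norm_nonneg a]) (by positivity) h2

noncomputable def Gfun (b D w₀ : ℂ) : ℂ → ℂ := fun w => mobius 1 (-b) (D * mobius 1 w₀ w)

noncomputable def Gfun' (b D w₀ : ℂ) : ℂ → ℂ := fun w =>
  (1 - (starRingEnd ℂ) (-b) * (-b)) / (1 - (starRingEnd ℂ) (-b) * (D * mobius 1 w₀ w))^2 *
    (D * ((1 - (starRingEnd ℂ) w₀ * w₀) / (1 - (starRingEnd ℂ) w₀ * w)^2))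

variable {b D w₀ w : ℂ}

lemma Gfun_lt_one (hb : ‖b‖ < 1) (hD : ‖D‖ = 1) (hw₀ : ‖w₀‖ < 1) (hw : ‖w‖ < 1) :
    ‖Gfun b D w₀ w‖ < 1 := by
  have ht : ‖mobius 1 w₀ w‖ < 1 := mobius_lt_one norm_one hw₀ hw
  have hDt : ‖D * mobius 1 w₀ w‖ < 1 := by rw [norm_mul, hD, one_mul]; exact ht
  exact mobius_lt_one norm_one (by simpa using hb) hDt

lemma Gfun_hasDerivAt (hb : ‖b‖ < 1) (hD : ‖D‖ = 1) (hw₀ : ‖w₀‖ < 1) (hw : ‖w‖ < 1) :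
    HasDerivAt (Gfun b D w₀) (Gfun' b D w₀ w) w := by
  have ht : ‖mobius 1 w₀ w‖ < 1 := mobius_lt_one norm_one hw₀ hw
  have hDt : ‖D * mobius 1 w₀ w‖ < 1 := by rw [norm_mul, hD, one_mul]; exact ht
  have i1 := mobius_hasDerivAt (l := 1) (a := w₀) w (denom_ne_zero' hw₀ hw.le)
  have i2 := i1.const_mul D
  have i3 := mobius_hasDerivAt (l := 1) (a := -b) (D * mobius 1 w₀ w)
    (denom_ne_zero' (by simpa using hb) hDt.le)
  have := i3.comp w i2
  refine this.congr_deriv ?_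
  unfold Gfun'
  ring

lemma Gfun_invariance (hb : ‖b‖ < 1) (hD : ‖D‖ = 1) (hw₀ : ‖w₀‖ < 1) (hw : ‖w‖ < 1) :
    1 - ‖Gfun b D w₀ w‖^2 = (1 - ‖w‖^2) * ‖Gfun' b D w₀ w‖ := by
  have ht : ‖mobius 1 w₀ w‖ < 1 := mobius_lt_one norm_one hw₀ hw
  have hDt : ‖D * mobius 1 w₀ w‖ < 1 := by rw [norm_mul, hD, one_mul]; exact ht
  have i1 := mobius_invariance (l := 1) (a := w₀) (w := w) norm_one hw₀ hw
  have i2 : 1 - ‖D * mobius 1 w₀ w‖^2 = 1 - ‖mobius 1 w₀ w‖^2 := by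
    rw [norm_mul, hD, one_mul]
  have i3 := mobius_invariance (l := 1) (a := -b) (w := D * mobius 1 w₀ w) norm_one
    (by simpa using hb) hDt
  have n2 := norm_mobius_deriv (l := 1) (a := -b) (w := D * mobius 1 w₀ w) norm_one
    (by simpa using hb)
  have n3 := norm_mobius_deriv (l := 1) (a := w₀) (w := w) norm_one hw₀
  rw [one_mul] at n2 n3
  have n1 : ‖Gfun' b D w₀ w‖ =
      ((1-‖(-b:ℂ)‖^2)/‖1 - (starRingEnd ℂ) (-b) * (D * mobius 1 w₀ w)‖^2) *
        ((1-‖w₀‖^2)/‖1 - (starRingEnd ℂ) w₀ * w‖^2) := by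
    unfold Gfun'
    rw [norm_mul, norm_mul, hD, one_mul, n2, n3]
  rw [show Gfun b D w₀ w = mobius 1 (-b) (D * mobius 1 w₀ w) from rfl, n1, i3, i2, i1]
  ring

lemma Gfun_bound (hb : ‖b‖ < 1) (hD : ‖D‖ = 1) (hw₀ : ‖w₀‖ < 1) (hw : ‖w‖ < 1) :
    1 - ‖Gfun b D w₀ w‖^2 ≤
      ((1-‖w₀‖^2)/(1-‖w₀‖)^2 * ((1-‖b‖^2)/(1-‖b‖)^2)) * (1 - ‖w‖^2) := by
  have ht : ‖mobius 1 w₀ w‖ < 1 := mobius_lt_one norm_one hw₀ hw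
  have hDt : ‖D * mobius 1 w₀ w‖ < 1 := by rw [norm_mul, hD, one_mul]; exact ht
  have i1 := mobius_invariance (l := 1) (a := w₀) (w := w) norm_one hw₀ hw
  have i2 : 1 - ‖D * mobius 1 w₀ w‖^2 = 1 - ‖mobius 1 w₀ w‖^2 := by
    rw [norm_mul, hD, one_mul]
  have i3 := mobius_invariance (l := 1) (a := -b) (w := D * mobius 1 w₀ w) norm_one
    (by simpa using hb) hDt
  have d1 := mobius_decay hw₀ hw
  have d2 := mobius_decay (by simpa using hb : ‖(-b : ℂ)‖ < 1) hDt
  rw [norm_neg] at d2 i3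
  have hw2 : (0:ℝ) ≤ 1 - ‖w‖^2 := by nlinarith [norm_nonneg w]
  have hk1 : (0:ℝ) ≤ (1-‖w₀‖^2)/‖1 - (starRingEnd ℂ) w₀ * w‖^2 := by
    have : (0:ℝ) < 1 - ‖w₀‖^2 := by nlinarith [norm_nonneg w₀]
    positivity
  have hk2 : (0:ℝ) ≤ (1-‖b‖^2)/‖1 - (starRingEnd ℂ) (-b) * (D * mobius 1 w₀ w)‖^2 := by
    have : (0:ℝ) < 1 - ‖b‖^2 := by nlinarith [norm_nonneg b]
    positivity
  have e1 : (0:ℝ) ≤ (1-‖w₀‖^2)/(1-‖w₀‖)^2 := le_trans hk1 d1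
  rw [show Gfun b D w₀ w = mobius 1 (-b) (D * mobius 1 w₀ w) from rfl, i3, i2, i1]
  calc (1 - ‖w‖ ^ 2) * ((1-‖w₀‖^2)/‖1 - (starRingEnd ℂ) w₀ * w‖^2) *
        ((1-‖b‖^2)/‖1 - (starRingEnd ℂ) (-b) * (D * mobius 1 w₀ w)‖^2)
      ≤ (1 - ‖w‖ ^ 2) * ((1-‖w₀‖^2)/(1-‖w₀‖)^2) * ((1-‖b‖^2)/(1-‖b‖)^2) := by
        apply mul_le_mul
        · exact mul_le_mul_of_nonneg_left d1 hw2
        · exact d2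
        · exact hk2
        · positivity
    _ = (1-‖w₀‖^2)/(1-‖w₀‖)^2 * ((1-‖b‖^2)/(1-‖b‖)^2) * (1 - ‖w‖ ^ 2) := by ring

set_option maxHeartbeats 1600000 in
lemma core (f : ℂ × ℂ → ℂ) (hf : DifferentiableOn ℂ f bidisk)
    (hmap : ∀ p ∈ bidisk, ‖f p‖ < 1) (z₀ w₀ : ℂ) (hz₀ : ‖z₀‖ < 1) (hw₀ : ‖w₀‖ < 1)
    (heq : 1 - ‖f (z₀, w₀)‖^2 = (1 - ‖w₀‖^2) * ‖fderiv ℂ f (z₀, w₀) (0, 1)‖) :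
    (∀ p ∈ bidisk, fderiv ℂ f p (1, 0) = 0) ∧
    (∀ p ∈ bidisk, 1 - ‖f p‖^2 = (1 - ‖p.2‖^2) * ‖fderiv ℂ f p (0, 1)‖) := by
  have hmem : ∀ ζ : ℂ, ‖ζ‖ < 1 → ζ ∈ ball (0:ℂ) 1 := fun ζ h => by
    simpa [mem_ball, dist_zero_right] using h
  have hball : ∀ ζ : ℂ, ζ ∈ ball (0:ℂ) 1 → ‖ζ‖ < 1 := fun ζ h => by
    simpa [mem_ball, dist_zero_right] using h
  set b := f (z₀, w₀) with hbdef
  have hb : ‖b‖ < 1 := hmap _ ⟨hz₀, hw₀⟩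
  have hb2 : (0:ℝ) < 1 - ‖b‖^2 := by nlinarith [norm_nonneg b]
  set g : ℂ → ℂ := fun w => f (z₀, w) with hgdef
  have hgm : ∀ w : ℂ, ‖w‖ < 1 → ‖g w‖ < 1 := fun w h => hmap _ ⟨hz₀, h⟩
  have hgD : ∀ w : ℂ, ‖w‖ < 1 → HasDerivAt g (fderiv ℂ f (z₀, w) (0, 1)) w := fun w h =>
    slice2_hasDerivAt f hf hz₀ h
  set D1 : ℂ := 1 * (1 - (starRingEnd ℂ) b * b) / (1 - (starRingEnd ℂ) b * b)^2 with hD1def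
  set D3 : ℂ := 1 * (1 - (starRingEnd ℂ) (-w₀) * (-w₀)) / (1 - (starRingEnd ℂ) (-w₀) * 0)^2
    with hD3def
  set g' : ℂ := fderiv ℂ f (z₀, w₀) (0, 1) with hg'def
  set D : ℂ := D1 * (g' * D3) with hDdef
  set h : ℂ → ℂ := fun ζ => mobius 1 b (g (mobius 1 (-w₀) ζ)) with hhdef
  have hψ0 : mobius 1 (-w₀) 0 = w₀ := mobius_zero_left
  have hgw0 : g w₀ = b := rfl
  -- derivative of h at 0
  have hψ : HasDerivAt (mobius 1 (-w₀)) D3 0 := mobius_hasDerivAt 0 (by simp)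
  have hgw₀ : HasDerivAt g g' (mobius 1 (-w₀) 0) := by rw [hψ0]; exact hgD w₀ hw₀
  have hinner : HasDerivAt (fun ζ => g (mobius 1 (-w₀) ζ)) (g' * D3) 0 := hgw₀.comp 0 hψ
  have hφ : HasDerivAt (mobius 1 b) D1 (g (mobius 1 (-w₀) 0)) := by
    rw [hψ0, hgw0]; exact mobius_hasDerivAt _ (denom_ne_zero' hb hb.le)
  have hh : HasDerivAt h D 0 := by have := hφ.comp 0 hinner; exact this
  -- norm of D is 1
  have hnD3 : ‖D3‖ = 1 - ‖w₀‖^2 := by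
    rw [hD3def, norm_mobius_deriv norm_one (by simpa using hw₀)]
    simp
  have hnD1 : ‖D1‖ = 1 / (1 - ‖b‖^2) := by
    rw [hD1def, norm_mobius_deriv norm_one hb, norm_one_sub_conj_self hb.le]
    field_simp [pow_two]
  have hprod : ‖g'‖ * (1 - ‖w₀‖^2) = 1 - ‖b‖^2 := by rw [mul_comm]; exact heq.symm
  have hDnorm : ‖D‖ = 1 := by
    rw [hDdef, norm_mul, norm_mul, hnD1, hnD3, hprod]
    field_simp
  -- differentiability and mapping of h
  have hin : ∀ ζ : ℂ, ‖ζ‖ < 1 → ‖mobius 1 (-w₀) ζ‖ < 1 := fun ζ hζ =>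
    mobius_lt_one norm_one (by simpa using hw₀) hζ
  have hhd : DifferentiableOn ℂ h (ball 0 1) := by
    intro ζ hζ
    have h1 : DifferentiableAt ℂ (mobius 1 (-w₀)) ζ :=
      mobius_differentiableAt (denom_ne_zero' (by simpa using hw₀) (hball ζ hζ).le)
    have h2 : DifferentiableAt ℂ g (mobius 1 (-w₀) ζ) :=
      (hgD _ (hin ζ (hball ζ hζ))).differentiableAt
    have h3 : DifferentiableAt ℂ (mobius 1 b) (g (mobius 1 (-w₀) ζ)) :=
      mobius_differentiableAt (denom_ne_zero' hb (hgm _ (hin ζ (hball ζ hζ))).le)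
    exact ((h3.comp _ h2).comp ζ h1).differentiableWithinAt
  have hh0 : h 0 = 0 := by
    rw [hhdef]
    simp only []
    rw [hψ0, hgw0, mobius_self hb]
  have hmaps : MapsTo h (ball 0 1) (ball (h 0) 1) := by
    intro ζ hζ
    rw [hh0]
    exact hmem _ (mobius_lt_one norm_one hb (hgm _ (hin ζ (hball ζ hζ))))
  have heqn : ‖dslope h 0 0‖ = 1 / 1 := by
    rw [dslope_same, hh.deriv, hDnorm]
    norm_num
  have haff := Complex.affine_of_mapsTo_ball_of_exists_norm_dslope_eq_div hhd (hmaps.mono_right ball_subset_closedBall)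
    (mem_ball_self one_pos) heqn
  -- the slice function g is the Möbius composite G
  have hkey : ∀ w : ℂ, ‖w‖ < 1 → mobius 1 b (g w) = D * mobius 1 w₀ w := by
    intro w hw
    have ht : ‖mobius 1 w₀ w‖ < 1 := mobius_lt_one norm_one hw₀ hw
    have h5 := haff (hmem _ ht)
    have hl : h (mobius 1 w₀ w) = mobius 1 b (g w) := by
      rw [hhdef]
      simp only []
      rw [mobius_inv_left hw₀ hw]
    rw [hl] at h5
    rw [h5, hh0, dslope_same, hh.deriv]
    simp [smul_eq_mul]
    ring
  have hG0 : ∀ w : ℂ, ‖w‖ < 1 → g w = mobius 1 (-b) (D * mobius 1 w₀ w) := by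
    intro w hw
    rw [← hkey w hw, mobius_inv_left hb (hgm w hw)]
  -- f agrees with the Möbius model in the second variable only
  set C : ℝ := (1-‖w₀‖^2)/(1-‖w₀‖)^2 * ((1-‖b‖^2)/(1-‖b‖)^2) with hCdef
  have hCpos : 0 < C := by
    rw [hCdef]
    have h1 : (0:ℝ) < 1 - ‖w₀‖ := by linarith
    have h2 : (0:ℝ) < 1 - ‖b‖ := by linarith
    have h3 : (0:ℝ) < 1 - ‖w₀‖^2 := by nlinarith [norm_nonneg w₀]
    positivity
  have hfG : ∀ z w : ℂ, ‖z‖ < 1 → ‖w‖ < 1 → f (z, w) = Gfun b D w₀ w := by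
    intro z w hz hw
    have hc : ‖mobius 1 z₀ z‖ < 1 := mobius_lt_one norm_one hz₀ hz
    set c := ‖mobius 1 z₀ z‖ with hcdef
    have hc0 : (0:ℝ) ≤ c := norm_nonneg _
    set K : ℝ := 2 * c * C / (1 - c) with hKdef
    have hKnn : 0 ≤ K := div_nonneg (by positivity) (by linarith)
    have hdiff : DifferentiableOn ℂ (fun w' => f (z, w') - Gfun b D w₀ w') (ball 0 1) := by
      intro w' hw'
      have h1 := (slice2_hasDerivAt f hf hz (hball _ hw')).differentiableAt
      have h2 := (Gfun_hasDerivAt hb hDnorm hw₀ (hball _ hw')).differentiableAt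
      exact (h1.sub h2).differentiableWithinAt
    have hbound : ∀ w' : ℂ, ‖w'‖ < 1 → ‖f (z, w') - Gfun b D w₀ w'‖ ≤ K * (1 - ‖w'‖) := by
      intro w' hw'
      have hFdiff : DifferentiableOn ℂ (fun z' => f (z', w')) (ball 0 1) := fun z' hz' =>
        ((slice1_hasDerivAt f hf (hball _ hz') hw').differentiableAt).differentiableWithinAt
      have hFm : ∀ z' ∈ ball (0:ℂ) 1, ‖f (z', w')‖ < 1 := fun z' h => hmap _ ⟨hball _ h, hw'⟩
      have hsp := schwarz_pick hFdiff hFm hz₀ hz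
      set u := f (z, w') with hudef
      set v := f (z₀, w') with hvdef
      have hvG : v = Gfun b D w₀ w' := hG0 w' hw'
      have hu : ‖u‖ < 1 := hmap _ ⟨hz, hw'⟩
      have hv : ‖v‖ < 1 := hmap _ ⟨hz₀, hw'⟩
      have hden : (1:ℂ) - (starRingEnd ℂ) v * u ≠ 0 := denom_ne_zero' hv hu.le
      have h1 : ‖u - v‖ ≤ c * ‖(1:ℂ) - (starRingEnd ℂ) v * u‖ := by
        have e : ‖mobius 1 v u‖ = ‖u - v‖ / ‖(1:ℂ) - (starRingEnd ℂ) v * u‖ := by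
          rw [mobius, norm_div, norm_mul, norm_one, one_mul]
        rw [e] at hsp
        exact (div_le_iff₀ (norm_pos_iff.mpr hden)).mp hsp
      have h2 : ‖(1:ℂ) - (starRingEnd ℂ) v * u‖ ≤ (1 - ‖v‖^2) + ‖u - v‖ := by
        have e : (1:ℂ) - (starRingEnd ℂ) v * u
            = (1 - (starRingEnd ℂ) v * v) + (starRingEnd ℂ) v * (v - u) := by ring
        rw [e]
        calc ‖((1:ℂ) - (starRingEnd ℂ) v * v) + (starRingEnd ℂ) v * (v - u)‖
            ≤ ‖(1:ℂ) - (starRingEnd ℂ) v * v‖ + ‖(starRingEnd ℂ) v * (v - u)‖ :=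
              norm_add_le _ _
          _ ≤ (1 - ‖v‖^2) + ‖u - v‖ := by
              rw [norm_one_sub_conj_self hv.le, norm_mul, RCLike.norm_conj]
              have hrev : ‖v - u‖ = ‖u - v‖ := norm_sub_rev v u
              nlinarith [norm_nonneg (v - u), norm_nonneg v, hv.le]
      have h3 : 1 - ‖v‖^2 ≤ C * (1 - ‖w'‖^2) := by
        rw [hvG, hCdef]
        exact Gfun_bound hb hDnorm hw₀ hw'
      have h4 : 1 - ‖w'‖^2 ≤ 2 * (1 - ‖w'‖) := by nlinarith [norm_nonneg w']
      have m1 := mul_le_mul_of_nonneg_left h2 hc0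
      have m2 := mul_le_mul_of_nonneg_left h3 hc0
      have m3 := mul_le_mul_of_nonneg_left h4 (mul_nonneg hc0 hCpos.le)
      rw [mul_add] at m1
      rw [← mul_assoc] at m2
      rw [← hvG, hKdef, div_mul_eq_mul_div, le_div_iff₀ (by linarith : (0:ℝ) < 1 - c)]
      nlinarith [h1, m1, m2, m3, norm_nonneg (u - v)]
    have hvan := vanish_of_boundary_decay hdiff hKnn hbound w hw
    exact sub_eq_zero.mp hvan
  -- conclusions
  constructor
  · intro p hp
    have hev : f =ᶠ[nhds p] fun q : ℂ × ℂ => Gfun b D w₀ q.2 :=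
      Filter.eventuallyEq_of_mem (isOpen_bidisk.mem_nhds hp)
        (fun q hq => hfG q.1 q.2 hq.1 hq.2)
    have hF2 : HasFDerivAt (fun q : ℂ × ℂ => Gfun b D w₀ q.2)
        (Gfun' b D w₀ p.2 • ContinuousLinearMap.snd ℂ ℂ ℂ) p :=
      (Gfun_hasDerivAt hb hDnorm hw₀ hp.2).comp_hasFDerivAt p hasFDerivAt_snd
    have hFf : HasFDerivAt f (Gfun' b D w₀ p.2 • ContinuousLinearMap.snd ℂ ℂ ℂ) p :=
      hF2.congr_of_eventuallyEq hev
    rw [hFf.fderiv]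
    simp
  · intro p hp
    have hev : f =ᶠ[nhds p] fun q : ℂ × ℂ => Gfun b D w₀ q.2 :=
      Filter.eventuallyEq_of_mem (isOpen_bidisk.mem_nhds hp)
        (fun q hq => hfG q.1 q.2 hq.1 hq.2)
    have hF2 : HasFDerivAt (fun q : ℂ × ℂ => Gfun b D w₀ q.2)
        (Gfun' b D w₀ p.2 • ContinuousLinearMap.snd ℂ ℂ ℂ) p :=
      (Gfun_hasDerivAt hb hDnorm hw₀ hp.2).comp_hasFDerivAt p hasFDerivAt_snd
    have hFf : HasFDerivAt f (Gfun' b D w₀ p.2 • ContinuousLinearMap.snd ℂ ℂ ℂ) p :=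
      hF2.congr_of_eventuallyEq hev
    have hfp : f p = Gfun b D w₀ p.2 := hfG p.1 p.2 hp.1 hp.2
    rw [hFf.fderiv, hfp, Gfun_invariance hb hDnorm hw₀ hp.2]
    congr 1
    simp

set_option maxHeartbeats 1600000 in
/-- If a partial derivative of a holomorphic `f : 𝔻² → 𝔻` vanishes at some point of the
extreme set `X(f)`, then `f` depends on only one variable and `X(f)` is the whole bidisk. -/
theorem depends_on_one_variable_of_vanishing_partial (f : ℂ × ℂ → ℂ)
    (hf : DifferentiableOn ℂ f bidisk) (hmap : ∀ p ∈ bidisk, ‖f p‖ < 1)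
    (P : ℂ × ℂ) (hP : P ∈ extremeSet f)
    (hzero : fderiv ℂ f P (1, 0) = 0 ∨ fderiv ℂ f P (0, 1) = 0) :
    ((∀ p ∈ bidisk, fderiv ℂ f p (1, 0) = 0) ∨ (∀ p ∈ bidisk, fderiv ℂ f p (0, 1) = 0)) ∧
    extremeSet f = bidisk := by
  obtain ⟨hPb, hPeq⟩ := hP
  obtain ⟨hP1, hP2⟩ := hPb
  rcases hzero with h10 | h01
  · -- ∂f/∂z vanishes at P
    have heq : 1 - ‖f (P.1, P.2)‖^2 = (1 - ‖P.2‖^2) * ‖fderiv ℂ f (P.1, P.2) (0, 1)‖ := by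
      rw [h10, norm_zero, mul_zero, zero_add] at hPeq
      exact hPeq
    obtain ⟨hA, hB⟩ := core f hf hmap P.1 P.2 hP1 hP2 heq
    refine ⟨Or.inl hA, ?_⟩
    ext p
    simp only [extremeSet, Set.mem_sep_iff]
    constructor
    · exact fun hp => hp.1
    · intro hp
      exact ⟨hp, by rw [hA p hp, norm_zero, mul_zero, zero_add]; exact hB p hp⟩
  · -- ∂f/∂w vanishes at P : apply `core` to the swapped function
    set F : ℂ × ℂ → ℂ := fun q => f (q.2, q.1) with hFdef
    have hswap : ∀ q : ℂ × ℂ, HasFDerivAt (fun q : ℂ × ℂ => ((q.2 : ℂ), (q.1 : ℂ)))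
        ((ContinuousLinearMap.snd ℂ ℂ ℂ).prod (ContinuousLinearMap.fst ℂ ℂ ℂ)) q :=
      fun q => HasFDerivAt.prodMk hasFDerivAt_snd hasFDerivAt_fst
    have hFdiff : DifferentiableOn ℂ F bidisk := by
      intro q hq
      have h1 : DifferentiableAt ℂ f (q.2, q.1) :=
        hf.differentiableAt (isOpen_bidisk.mem_nhds ⟨hq.2, hq.1⟩)
      exact (h1.comp q (hswap q).differentiableAt).differentiableWithinAt
    have hFm : ∀ q ∈ bidisk, ‖F q‖ < 1 := fun q hq => hmap _ ⟨hq.2, hq.1⟩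
    have hFD : ∀ q : ℂ × ℂ, q ∈ bidisk → ∀ v : ℂ × ℂ,
        fderiv ℂ F q v = fderiv ℂ f (q.2, q.1) (v.2, v.1) := by
      intro q hq v
      have h1 : HasFDerivAt f (fderiv ℂ f (q.2, q.1)) (q.2, q.1) :=
        (hf.differentiableAt (isOpen_bidisk.mem_nhds ⟨hq.2, hq.1⟩)).hasFDerivAt
      have h2 : HasFDerivAt F ((fderiv ℂ f (q.2, q.1)).comp
          ((ContinuousLinearMap.snd ℂ ℂ ℂ).prod (ContinuousLinearMap.fst ℂ ℂ ℂ))) q :=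
        h1.comp q (hswap q)
      rw [h2.fderiv]
      rfl
    have heq : 1 - ‖F (P.2, P.1)‖^2 = (1 - ‖P.1‖^2) * ‖fderiv ℂ F (P.2, P.1) (0, 1)‖ := by
      have e2 : fderiv ℂ F (P.2, P.1) ((0:ℂ), (1:ℂ)) = fderiv ℂ f P (1, 0) := by
        rw [hFD (P.2, P.1) ⟨hP2, hP1⟩]
      have e1 : F (P.2, P.1) = f P := rfl
      rw [e1, e2]
      rw [h01, norm_zero, mul_zero, add_zero] at hPeq
      exact hPeq
    obtain ⟨hA, hB⟩ := core F hFdiff hFm P.2 P.1 hP2 hP1 heq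
    have hA' : ∀ p ∈ bidisk, fderiv ℂ f p (0, 1) = 0 := by
      intro p hp
      have h := hA (p.2, p.1) ⟨hp.2, hp.1⟩
      rw [hFD (p.2, p.1) ⟨hp.2, hp.1⟩] at h
      exact h
    have hB' : ∀ p ∈ bidisk, 1 - ‖f p‖^2 = (1 - ‖p.1‖^2) * ‖fderiv ℂ f p (1, 0)‖ := by
      intro p hp
      have h := hB (p.2, p.1) ⟨hp.2, hp.1⟩
      rw [hFD (p.2, p.1) ⟨hp.2, hp.1⟩] at h
      exact h
    refine ⟨Or.inr hA', ?_⟩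
    ext p
    simp only [extremeSet, Set.mem_sep_iff]
    constructor
    · exact fun hp => hp.1
    · intro hp
      exact ⟨hp, by rw [hA' p hp, norm_zero, mul_zero, add_zero]; exact hB' p hp⟩
end

section
/- Let f : 𝔻² → 𝔻 be holomorphic with f(0,0) = 0, ∂f/∂z (0,0) = 0 and ∂f/∂w (0,0) = 1. Then f(z,w) = w for all (z,w) ∈ 𝔻². -/
/-!
Restricted to the complex line `ζ ↦ ζ • (z / w, 1)`, which stays in the bidisk when `‖z‖ < ‖w‖`,
`f` is a self-map of the disk fixing `0` with derivative `1` there, so it is the identity by the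
equality case of the Schwarz lemma; hence `f (z, w) = w` whenever `‖z‖ < ‖w‖`. For fixed `z`,
both sides are holomorphic in `w` and agree on an annulus, so they agree on the whole disk.
-/

open Metric Set

theorem bidisk_eq_ball : bidisk = ball (0 : ℂ × ℂ) 1 := by
  ext p
  simp [bidisk, Prod.norm_def]

theorem eqOn_id_of_mapsTo_ball_of_deriv_eq_one {g : ℂ → ℂ}
    (hg : DifferentiableOn ℂ g (ball 0 1)) (hmap : MapsTo g (ball 0 1) (ball 0 1))
    (h0 : g 0 = 0) (h1 : deriv g 0 = 1) : EqOn g id (ball 0 1) := by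
  have hmap' : MapsTo g (ball 0 1) (closedBall (g 0) 1) := by
    rw [h0]
    exact hmap.mono_right ball_subset_closedBall
  have hslope : ‖dslope g 0 0‖ = 1 / 1 := by simp [h1]
  intro z hz
  simpa [h0, h1] using
    Complex.affine_of_mapsTo_ball_of_norm_dslope_eq_div hg hmap' (mem_ball_self one_pos) hslope hz

theorem apply_smul_eq_of_fderiv_apply_eq_one {E : Type*} [NormedAddCommGroup E]
    [NormedSpace ℂ E] {f : E → ℂ} (hf : DifferentiableOn ℂ f (ball 0 1))
    (hmap : MapsTo f (ball 0 1) (ball 0 1)) (h0 : f 0 = 0) {v : E} (hv : ‖v‖ ≤ 1)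
    (hfv : fderiv ℂ f 0 v = 1) {ζ : ℂ} (hζ : ζ ∈ ball 0 1) : f (ζ • v) = ζ := by
  have hline : MapsTo (· • v) (ball (0 : ℂ) 1) (ball 0 1) := fun ξ hξ => by
    rw [mem_ball_zero_iff] at hξ ⊢
    calc ‖ξ • v‖ = ‖ξ‖ * ‖v‖ := norm_smul ξ v
      _ ≤ ‖ξ‖ := mul_le_of_le_one_right (norm_nonneg ξ) hv
      _ < 1 := hξ
  have hderiv : HasDerivAt (fun ξ : ℂ => f (ξ • v)) 1 0 := by
    have hfd : HasFDerivAt f (fderiv ℂ f 0) ((0 : ℂ) • v) := by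
      rw [zero_smul]
      exact (hf.differentiableAt (ball_mem_nhds 0 one_pos)).hasFDerivAt
    have := hfd.comp_hasDerivAt (0 : ℂ) ((hasDerivAt_id (0 : ℂ)).smul_const v)
    rwa [one_smul, hfv] at this
  refine eqOn_id_of_mapsTo_ball_of_deriv_eq_one ?_ (hmap.comp hline) (by simp [h0])
    hderiv.deriv hζ
  exact hf.comp ((differentiable_id.smul_const v).differentiableOn) hline

theorem eqOn_ball_of_eqOn_annulus {g h : ℂ → ℂ} (hg : DifferentiableOn ℂ g (ball 0 1))
    (hh : DifferentiableOn ℂ h (ball 0 1)) {r : ℝ} (hr : r < 1)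
    (hgh : ∀ w : ℂ, r < ‖w‖ → ‖w‖ < 1 → g w = h w) : EqOn g h (ball 0 1) := by
  set w₀ : ℂ := (((max r 0 + 1) / 2 : ℝ) : ℂ)
  have hw₀ : ‖w₀‖ = (max r 0 + 1) / 2 := by
    rw [Complex.norm_real, Real.norm_of_nonneg (by positivity)]
  have hannulus : IsOpen {w : ℂ | r < ‖w‖ ∧ ‖w‖ < 1} :=
    (isOpen_lt continuous_const continuous_norm).inter (isOpen_lt continuous_norm continuous_const)
  have hw₀_mem : r < ‖w₀‖ ∧ ‖w₀‖ < 1 := by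
    constructor <;> rw [hw₀] <;> linarith [le_max_left r 0, le_max_right r 0, max_lt hr one_pos]
  refine (hg.analyticOnNhd isOpen_ball).eqOn_of_preconnected_of_eventuallyEq
    (hh.analyticOnNhd isOpen_ball) (convex_ball 0 1).isPreconnected
    (mem_ball_zero_iff.mpr hw₀_mem.2) ?_
  filter_upwards [hannulus.mem_nhds hw₀_mem] with w hw using hgh w hw.1 hw.2

theorem apply_eq_snd_of_norm_fst_lt_norm_snd {f : ℂ × ℂ → ℂ}
    (hf : DifferentiableOn ℂ f (ball 0 1)) (hmap : MapsTo f (ball 0 1) (ball 0 1))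
    (h0 : f 0 = 0) (h1 : fderiv ℂ f 0 (1, 0) = 0) (h2 : fderiv ℂ f 0 (0, 1) = 1)
    {z w : ℂ} (hzw : ‖z‖ < ‖w‖) (hw : ‖w‖ < 1) : f (z, w) = w := by
  have hw0 : w ≠ 0 := norm_pos_iff.mp ((norm_nonneg z).trans_lt hzw)
  have hv : ‖((z / w, 1) : ℂ × ℂ)‖ ≤ 1 := by
    simp [Prod.norm_def, div_le_one (norm_pos_iff.mpr hw0), hzw.le]
  have hfv : fderiv ℂ f 0 (z / w, 1) = 1 := by
    rw [show ((z / w, 1) : ℂ × ℂ) = (z / w) • (1, 0) + (0, 1) by simp, map_add, map_smul]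
    simp [h1, h2]
  simpa [mul_div_cancel₀ z hw0] using
    apply_smul_eq_of_fderiv_apply_eq_one hf hmap h0 hv hfv (mem_ball_zero_iff.mpr hw)

/-- Schwarz-type rigidity on the bidisk: if `f : 𝔻² → 𝔻` is holomorphic with `f(0,0) = 0`,
`∂f/∂z(0,0) = 0` and `∂f/∂w(0,0) = 1`, then `f(z,w) = w`. -/
theorem eq_snd_of_schwarz_extremal (f : ℂ × ℂ → ℂ)
    (hf : DifferentiableOn ℂ f bidisk) (hmap : ∀ p ∈ bidisk, ‖f p‖ < 1)
    (h0 : f (0, 0) = 0)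
    (h1 : fderiv ℂ f (0, 0) (1, 0) = 0)
    (h2 : fderiv ℂ f (0, 0) (0, 1) = 1) :
    ∀ p ∈ bidisk, f p = p.2 := by
  rintro ⟨z, w⟩ ⟨hz, hw⟩
  rw [bidisk_eq_ball] at hf hmap
  rw [← Prod.zero_eq_mk] at h0 h1 h2
  have hmap' : MapsTo f (ball 0 1) (ball 0 1) := fun p hp => mem_ball_zero_iff.mpr (hmap p hp)
  have hslice : DifferentiableOn ℂ (fun w' => f (z, w')) (ball 0 1) :=
    hf.comp (differentiable_const z |>.prodMk differentiable_id).differentiableOn fun w' hw' => by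
      simpa [Prod.norm_def] using And.intro hz (mem_ball_zero_iff.mp hw')
  exact eqOn_ball_of_eqOn_annulus hslice differentiableOn_id hz
    (fun w' hzw' hw' => apply_eq_snd_of_norm_fst_lt_norm_snd hf hmap' h0 h1 h2 hzw' hw')
    (mem_ball_zero_iff.mpr hw)
end

section
/- Two balanced disks in 𝔻² either do not intersect, intersect in exactly one point, or are equal. That is, if D₁ = {(φ₁(ζ), φ₂(ζ)) : ζ ∈ 𝔻} and D₂ = {(ψ₁(ζ), ψ₂(ζ)) : ζ ∈ 𝔻} are balanced disks with at least two distinct common points, then D₁ = D₂. -/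
open Complex Metric Set ComplexConjugate

local notation "𝔻" => ball (0 : ℂ) 1

lemma one_sub_conj_mul_ne_zero {a z : ℂ} (ha : ‖a‖ < 1) (hz : ‖z‖ < 1) : 1 - conj a * z ≠ 0 := by
  have h : ‖conj a * z‖ < 1 := by
    rw [norm_mul, RCLike.norm_conj]
    exact mul_lt_one_of_nonneg_of_lt_one_left (norm_nonneg a) ha hz.le
  exact sub_ne_zero.2 fun h' => h.ne (by rw [← h', norm_one])

lemma normSq_one_sub_conj_mul_sub_normSq_sub (a z : ℂ) :
    normSq (1 - conj a * z) - normSq (z - a) = (1 - normSq a) * (1 - normSq z) := by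
  simp only [normSq_apply, sub_re, sub_im, mul_re, mul_im, one_re, one_im, conj_re, conj_im]
  ring

lemma norm_sub_lt_norm_one_sub_conj_mul {a z : ℂ} (ha : ‖a‖ < 1) (hz : ‖z‖ < 1) :
    ‖z - a‖ < ‖1 - conj a * z‖ := by
  have key := normSq_one_sub_conj_mul_sub_normSq_sub a z
  simp only [normSq_eq_norm_sq] at key
  have hpos : 0 < (1 - ‖a‖ ^ 2) * (1 - ‖z‖ ^ 2) :=
    mul_pos (by nlinarith [norm_nonneg a]) (by nlinarith [norm_nonneg z])
  exact lt_of_pow_lt_pow_left₀ 2 (norm_nonneg _) (by linarith)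

lemma norm_mobius_lt_one {l a z : ℂ} (hl : ‖l‖ = 1) (ha : ‖a‖ < 1) (hz : ‖z‖ < 1) :
    ‖mobius l a z‖ < 1 := by
  rw [mobius, norm_div, norm_mul, hl, one_mul,
    div_lt_one (norm_pos_iff.2 (one_sub_conj_mul_ne_zero ha hz))]
  exact norm_sub_lt_norm_one_sub_conj_mul ha hz

lemma mul_conj_eq_one {l : ℂ} (hl : ‖l‖ = 1) : l * conj l = 1 := by
  rw [mul_conj', hl]; norm_num

lemma mobius_mobius {l m a b z : ℂ} (hl : ‖l‖ = 1) (hz : 1 - conj a * z ≠ 0) :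
    mobius m b (mobius l a z) =
      m * ((l + b * conj a) * z - (l * a + b)) /
        (l * (conj (l + b * conj a) - conj (l * a + b) * z)) := by
  have hll := mul_conj_eq_one hl
  have cancel : l * (z - a) / (1 - conj a * z) * (1 - conj a * z) = l * (z - a) :=
    div_mul_cancel₀ _ hz
  have num : m * (l * (z - a) / (1 - conj a * z) - b) =
      m * ((l + b * conj a) * z - (l * a + b)) / (1 - conj a * z) := by
    rw [eq_div_iff hz]
    linear_combination m * cancel
  have den : 1 - conj b * (l * (z - a) / (1 - conj a * z)) =
      l * (conj (l + b * conj a) - conj (l * a + b) * z) / (1 - conj a * z) := by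
    simp only [map_add, map_mul, conj_conj]
    rw [eq_div_iff hz]
    linear_combination (-conj b) * cancel - (1 - conj a * z) * hll
  rw [mobius, mobius, num, den, div_div_div_cancel_right₀ hz]

lemma mul_sub_div_eq_mobius {l m u w : ℂ} (z : ℂ) (hu : u ≠ 0) :
    m * (u * z - w) / (l * (conj u - conj w * z)) = mobius (m * u / (l * conj u)) (w / u) z := by
  have hu' : conj u ≠ 0 := (map_ne_zero _).2 hu
  simp only [mobius, map_div₀]
  field_simp

lemma norm_mul_add_lt_norm_add_mul_conj {l a b : ℂ} (hl : ‖l‖ = 1) (ha : ‖a‖ < 1)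
    (hb : ‖b‖ < 1) :
    ‖l * a + b‖ < ‖l + b * conj a‖ := by
  have hll := mul_conj_eq_one hl
  have he : ‖-(conj l * b)‖ < 1 := by simpa [hl] using hb
  have key := norm_sub_lt_norm_one_sub_conj_mul ha he
  have e1 : l * a + b = -l * (-(conj l * b) - a) := by linear_combination (-b) * hll
  have e2 : l + b * conj a = l * (1 - conj a * -(conj l * b)) := by
    linear_combination (-(b * conj a)) * hll
  rw [e1, e2, norm_mul, norm_mul, norm_neg, hl, one_mul, one_mul]
  exact key

lemma mobius_conj_mobius {l a z : ℂ} (hl : ‖l‖ = 1) (ha : ‖a‖ < 1) (hz : ‖z‖ < 1) :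
    mobius (conj l) (-(l * a)) (mobius l a z) = z := by
  have hll := mul_conj_eq_one hl
  have ha' : ‖-(l * a)‖ < 1 := by rwa [norm_neg, norm_mul, hl, one_mul]
  have hd := one_sub_conj_mul_ne_zero ha' (norm_mobius_lt_one hl ha hz)
  have hd' : 1 - z * conj a ≠ 0 := by rw [mul_comm]; exact one_sub_conj_mul_ne_zero ha hz
  simp only [mobius] at hd ⊢
  rw [div_eq_iff hd]
  field_simp
  simp only [map_neg, map_mul]
  linear_combination (z - z ^ 2 * conj a) * hll

lemma mobius_mobius_conj {l a z : ℂ} (hl : ‖l‖ = 1) (ha : ‖a‖ < 1) (hz : ‖z‖ < 1) :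
    mobius l a (mobius (conj l) (-(l * a)) z) = z := by
  have hl' : ‖conj l‖ = 1 := by rwa [RCLike.norm_conj]
  have ha' : ‖-(l * a)‖ < 1 := by rwa [norm_neg, norm_mul, hl, one_mul]
  have h := mobius_conj_mobius hl' ha' hz
  rwa [conj_conj, show -(conj l * -(l * a)) = a by linear_combination a * mul_conj_eq_one hl] at h

lemma eq_zero_of_quadratic_eq_zero {A B C z₁ z₂ : ℂ} (hAC : ‖C‖ = ‖A‖) (h₁ : ‖z₁‖ < 1)
    (h₂ : ‖z₂‖ < 1) (hne : z₁ ≠ z₂) (e₁ : A * z₁ ^ 2 + B * z₁ + C = 0)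
    (e₂ : A * z₂ ^ 2 + B * z₂ + C = 0) : A = 0 ∧ B = 0 ∧ C = 0 := by
  have hz : z₁ - z₂ ≠ 0 := sub_ne_zero.2 hne
  have hA : A = 0 := by
    by_contra hA
    have hsum : A * (z₁ + z₂) + B = 0 := by
      refine (mul_eq_zero.1 ?_).resolve_left hz
      linear_combination e₁ - e₂
    have hprod : C = A * (z₁ * z₂) := by linear_combination e₁ - z₁ * hsum
    have : ‖z₁ * z₂‖ < 1 := by
      rw [norm_mul]; exact mul_lt_one_of_nonneg_of_lt_one_left (norm_nonneg _) h₁ h₂.le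
    have : ‖C‖ < ‖A‖ := by
      rw [hprod, norm_mul]; exact mul_lt_of_lt_one_right (norm_pos_iff.2 hA) this
    exact this.ne hAC
  have hB : B = 0 := by
    refine (mul_eq_zero.1 ?_).resolve_left hz
    linear_combination e₁ - e₂ - (z₁ ^ 2 - z₂ ^ 2) * hA
  exact ⟨hA, hB, by linear_combination e₁ - z₁ ^ 2 * hA - z₁ * hB⟩

lemma eqOn_mobius_of_eq_of_eq {l m a b z₁ z₂ : ℂ} (hl : ‖l‖ = 1) (hm : ‖m‖ = 1) (ha : ‖a‖ < 1)
    (hb : ‖b‖ < 1) (h₁ : ‖z₁‖ < 1) (h₂ : ‖z₂‖ < 1) (hne : z₁ ≠ z₂)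
    (e₁ : mobius l a z₁ = mobius m b z₁) (e₂ : mobius l a z₂ = mobius m b z₂) :
    EqOn (mobius l a) (mobius m b) 𝔻 := by
  set A := m * conj a - l * conj b
  set B := l * (1 + a * conj b) - m * (1 + b * conj a)
  set C := m * b - l * a
  have quadratic {z : ℂ} (hz : ‖z‖ < 1) :
      mobius l a z = mobius m b z ↔ A * z ^ 2 + B * z + C = 0 := by
    rw [mobius, mobius, div_eq_div_iff (one_sub_conj_mul_ne_zero ha hz)
      (one_sub_conj_mul_ne_zero hb hz), ← sub_eq_zero]
    constructor <;> intro h <;> linear_combination h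
  have hAC : ‖C‖ = ‖A‖ := by
    have : C = -(l * m * conj A) := by
      simp only [A, C, map_sub, map_mul, conj_conj]
      linear_combination (a * l) * mul_conj_eq_one hm - (b * m) * mul_conj_eq_one hl
    rw [this, norm_neg, norm_mul, norm_mul, hl, hm, RCLike.norm_conj, one_mul, one_mul]
  obtain ⟨hA, hB, hC⟩ :=
    eq_zero_of_quadratic_eq_zero hAC h₁ h₂ hne ((quadratic h₁).1 e₁) ((quadratic h₂).1 e₂)
  intro z hz
  rw [mem_ball_zero_iff] at hz
  rw [quadratic hz, hA, hB, hC]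
  ring

namespace IsDiskAut

variable {φ ψ : ℂ → ℂ}

lemma mapsTo (hφ : IsDiskAut φ) : MapsTo φ 𝔻 𝔻 := by
  obtain ⟨l, a, hl, ha, hφ⟩ := hφ
  intro z hz
  rw [mem_ball_zero_iff] at hz ⊢
  rw [hφ z hz]
  exact norm_mobius_lt_one hl ha hz

lemma comp (hφ : IsDiskAut φ) (hψ : IsDiskAut ψ) : IsDiskAut (ψ ∘ φ) := by
  obtain ⟨l, a, hl, ha, hφ⟩ := hφ
  obtain ⟨m, b, hm, hb, hψ⟩ := hψ
  have hwu := norm_mul_add_lt_norm_add_mul_conj hl ha hb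
  set u := l + b * conj a
  have hu : u ≠ 0 := norm_pos_iff.1 ((norm_nonneg _).trans_lt hwu)
  refine ⟨m * u / (l * conj u), (l * a + b) / u, ?_, ?_, fun z hz => ?_⟩
  · rw [norm_div, norm_mul, norm_mul, hm, hl, RCLike.norm_conj, one_mul,
      div_self (norm_ne_zero_iff.2 hu)]
  · rwa [norm_div, div_lt_one (norm_pos_iff.2 hu)]
  · rw [Function.comp_apply, hφ z hz, hψ _ (norm_mobius_lt_one hl ha hz),
      mobius_mobius hl (one_sub_conj_mul_ne_zero ha hz), mul_sub_div_eq_mobius z hu]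

lemma exists_invOn (hφ : IsDiskAut φ) : ∃ ψ, IsDiskAut ψ ∧ InvOn ψ φ 𝔻 𝔻 := by
  obtain ⟨l, a, hl, ha, hφ⟩ := hφ
  have hl' : ‖conj l‖ = 1 := by rwa [RCLike.norm_conj]
  have ha' : ‖-(l * a)‖ < 1 := by rwa [norm_neg, norm_mul, hl, one_mul]
  refine ⟨mobius (conj l) (-(l * a)), ⟨_, _, hl', ha', fun _ _ => rfl⟩, fun z hz => ?_,
    fun z hz => ?_⟩ <;> rw [mem_ball_zero_iff] at hz
  · rw [hφ z hz, mobius_conj_mobius hl ha hz]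
  · rw [hφ _ (norm_mobius_lt_one hl' ha' hz), mobius_mobius_conj hl ha hz]

lemma eqOn_of_eq_of_eq (hφ : IsDiskAut φ) (hψ : IsDiskAut ψ) {z₁ z₂ : ℂ} (h₁ : z₁ ∈ 𝔻)
    (h₂ : z₂ ∈ 𝔻) (hne : z₁ ≠ z₂) (e₁ : φ z₁ = ψ z₁) (e₂ : φ z₂ = ψ z₂) : EqOn φ ψ 𝔻 := by
  obtain ⟨l, a, hl, ha, hφ⟩ := hφ
  obtain ⟨m, b, hm, hb, hψ⟩ := hψ
  have hφψ : ∀ z ∈ 𝔻, φ z = ψ z ↔ mobius l a z = mobius m b z := fun z hz => by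
    rw [mem_ball_zero_iff] at hz
    rw [hφ z hz, hψ z hz]
  intro z hz
  rw [hφψ z hz]
  exact eqOn_mobius_of_eq_of_eq hl hm ha hb (mem_ball_zero_iff.1 h₁) (mem_ball_zero_iff.1 h₂) hne
    ((hφψ _ h₁).1 e₁) ((hφψ _ h₂).1 e₂) hz

end IsDiskAut

lemma IsBalancedDisk.exists_eq_graphOn {D : Set (ℂ × ℂ)} (hD : IsBalancedDisk D) :
    ∃ f, IsDiskAut f ∧ D = graphOn f 𝔻 := by
  obtain ⟨φ₁, φ₂, hφ₁, hφ₂, rfl⟩ := hD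
  obtain ⟨ψ, hψ, hinv⟩ := hφ₁.exists_invOn
  refine ⟨φ₂ ∘ ψ, hψ.comp hφ₂, ?_⟩
  ext ⟨z, w⟩
  simp only [mem_ofPred_eq, mem_graphOn, Prod.mk.injEq, Function.comp_apply]
  constructor
  · rintro ⟨ζ, hζ, rfl, rfl⟩
    rw [← mem_ball_zero_iff] at hζ
    exact ⟨hφ₁.mapsTo hζ, by rw [hinv.1 hζ]⟩
  · rintro ⟨hz, rfl⟩
    exact ⟨ψ z, mem_ball_zero_iff.1 (hψ.mapsTo hz), (hinv.2 hz).symm, rfl⟩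

/-- Two balanced disks with at least two distinct common points coincide. -/
theorem balanced_disks_eq_of_two_common_points (D₁ D₂ : Set (ℂ × ℂ))
    (h1 : IsBalancedDisk D₁) (h2 : IsBalancedDisk D₂)
    (p q : ℂ × ℂ) (hp : p ∈ D₁ ∩ D₂) (hq : q ∈ D₁ ∩ D₂) (hpq : p ≠ q) :
    D₁ = D₂ := by
  obtain ⟨f, hf, rfl⟩ := h1.exists_eq_graphOn
  obtain ⟨g, hg, rfl⟩ := h2.exists_eq_graphOn
  simp only [mem_inter_iff, mem_graphOn] at hp hq
  have hne : p.1 ≠ q.1 := fun h => hpq (Prod.ext h (by rw [← hp.1.2, ← hq.1.2, h]))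
  have hfg : EqOn f g 𝔻 := hf.eqOn_of_eq_of_eq hg hp.1.1 hq.1.1 hne
    (hp.1.2.trans hp.2.2.symm) (hq.1.2.trans hq.2.2.symm)
  exact image_congr fun z hz => by rw [hfg hz]
end

section
/- Let a, b, μ ∈ ℂ with |μ| = 1 and |a| + |b| = 1, and define f(z,w) = μ (az + bw − zw)/(1 − b̄z − āw) for (z,w) ∈ 𝔻². Then f is a well-defined holomorphic map from 𝔻² to 𝔻 with f(0,0) = 0, and f is everywhere infinitesimally extremal: for every (z,w) ∈ 𝔻², 1 − |f(z,w)|² = (1 − |z|²)|f₁(z,w)| + (1 − |w|²)|f₂(z,w)|. -/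
open ComplexConjugate

section

variable {𝕜 E F : Type*} [NontriviallyNormedField 𝕜] [NormedAddCommGroup E] [NormedSpace 𝕜 E]
  [NormedAddCommGroup F] [NormedSpace 𝕜 F]

theorem DifferentiableAt.hasDerivAt_fderiv_apply_one_zero {f : 𝕜 × E → F} {x : 𝕜} {y : E}
    (hf : DifferentiableAt 𝕜 f (x, y)) :
    HasDerivAt (fun ζ => f (ζ, y)) (fderiv 𝕜 f (x, y) (1, 0)) x :=
  hf.hasFDerivAt.comp_hasDerivAt x ((hasDerivAt_id x).prodMk (hasDerivAt_const x y))

theorem DifferentiableAt.hasDerivAt_fderiv_apply_zero_one {f : E × 𝕜 → F} {x : E} {y : 𝕜}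
    (hf : DifferentiableAt 𝕜 f (x, y)) :
    HasDerivAt (fun ζ => f (x, ζ)) (fderiv 𝕜 f (x, y) (0, 1)) y :=
  hf.hasFDerivAt.comp_hasDerivAt y ((hasDerivAt_const y x).prodMk (hasDerivAt_id y))

end

theorem Complex.sub_conj_mul_ne_zero {s w : ℂ} (hs : s ≠ 0) (hw : ‖w‖ < 1) :
    s - conj s * w ≠ 0 := by
  refine sub_ne_zero.2 fun h => ?_
  have : ‖s‖ * ‖w‖ < ‖s‖ := mul_lt_of_lt_one_right (norm_pos_iff.2 hs) hw
  rw [← Complex.norm_conj s, ← norm_mul, ← h, Complex.norm_conj] at this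
  exact this.false

namespace ExtremalFun

def numer (s t : ℂ) (p : ℂ × ℂ) : ℂ := s ^ 2 * p.1 + t ^ 2 * p.2 - p.1 * p.2

def denom (s t : ℂ) (p : ℂ × ℂ) : ℂ := 1 - conj (t ^ 2) * p.1 - conj (s ^ 2) * p.2

noncomputable def extremalFun (μ s t : ℂ) (p : ℂ × ℂ) : ℂ := μ * numer s t p / denom s t p

theorem numer_swap (s t : ℂ) (p : ℂ × ℂ) : numer s t p.swap = numer t s p := by
  simp only [numer, Prod.fst_swap, Prod.snd_swap]; ring

theorem denom_swap (s t : ℂ) (p : ℂ × ℂ) : denom s t p.swap = denom t s p := by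
  simp only [denom, Prod.fst_swap, Prod.snd_swap]; ring

theorem extremalFun_swap (μ s t : ℂ) (p : ℂ × ℂ) :
    extremalFun μ s t p.swap = extremalFun μ t s p := by
  simp only [extremalFun, numer_swap, denom_swap]

variable {μ s t : ℂ}

theorem mul_conj_add_mul_conj_eq_one (hst : ‖s‖ ^ 2 + ‖t‖ ^ 2 = 1) :
    s * conj s + t * conj t = 1 := by
  simp only [Complex.mul_conj']
  exact_mod_cast hst

theorem norm_sq_denom_sub_norm_sq_numer (hst : ‖s‖ ^ 2 + ‖t‖ ^ 2 = 1) (p : ℂ × ℂ) :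
    ‖denom s t p‖ ^ 2 - ‖numer s t p‖ ^ 2 =
      (1 - ‖p.1‖ ^ 2) * ‖s - conj s * p.2‖ ^ 2 + (1 - ‖p.2‖ ^ 2) * ‖t - conj t * p.1‖ ^ 2 := by
  apply Complex.ofReal_injective
  push_cast
  simp only [← Complex.mul_conj', denom, numer, map_sub, map_add, map_mul, map_one, map_pow,
    Complex.conj_conj]
  linear_combination (-1 + p.1 * conj p.1 * p.2 * conj p.2 - t * conj t * p.2 * conj p.2
    + t * conj t * p.1 * conj p.1 + s * conj s * p.2 * conj p.2 - s * conj s * p.1 * conj p.1) *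
    mul_conj_add_mul_conj_eq_one hst

theorem norm_numer_lt_norm_denom (hst : ‖s‖ ^ 2 + ‖t‖ ^ 2 = 1) {p : ℂ × ℂ} (hp : p ∈ bidisk) :
    ‖numer s t p‖ < ‖denom s t p‖ := by
  obtain ⟨hz, hw⟩ := hp
  have hz2 : 0 < 1 - ‖p.1‖ ^ 2 := by nlinarith [norm_nonneg p.1]
  have hw2 : 0 < 1 - ‖p.2‖ ^ 2 := by nlinarith [norm_nonneg p.2]
  have hpos : 0 < ‖denom s t p‖ ^ 2 - ‖numer s t p‖ ^ 2 := by
    rw [norm_sq_denom_sub_norm_sq_numer hst]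
    by_cases hs : s = 0
    · have ht : t ≠ 0 := by rintro rfl; simp [hs] at hst
      have := norm_pos_iff.2 (Complex.sub_conj_mul_ne_zero ht hz)
      positivity
    · have := norm_pos_iff.2 (Complex.sub_conj_mul_ne_zero hs hw)
      positivity
  exact lt_of_pow_lt_pow_left₀ 2 (norm_nonneg _) (by linarith)

theorem denom_ne_zero (hst : ‖s‖ ^ 2 + ‖t‖ ^ 2 = 1) {p : ℂ × ℂ} (hp : p ∈ bidisk) :
    denom s t p ≠ 0 :=
  norm_pos_iff.1 ((norm_nonneg _).trans_lt (norm_numer_lt_norm_denom hst hp))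

theorem deriv_fst_numerator_eq_sq (hst : ‖s‖ ^ 2 + ‖t‖ ^ 2 = 1) (z w : ℂ) :
    (s ^ 2 - w) * denom s t (z, w) + numer s t (z, w) * conj (t ^ 2) = (s - conj s * w) ^ 2 := by
  simp only [denom, numer, map_pow]
  linear_combination (w + t * conj t * w - s * conj s * w) * mul_conj_add_mul_conj_eq_one hst

theorem hasDerivAt_extremalFun_fst (hst : ‖s‖ ^ 2 + ‖t‖ ^ 2 = 1) {z w : ℂ}
    (hD : denom s t (z, w) ≠ 0) :
    HasDerivAt (fun ζ => extremalFun μ s t (ζ, w))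
      (μ * (s - conj s * w) ^ 2 / denom s t (z, w) ^ 2) z := by
  have hN : HasDerivAt (fun ζ => μ * numer s t (ζ, w)) (μ * (s ^ 2 - w)) z :=
    ((((hasDerivAt_id z).const_mul (s ^ 2)).add_const (t ^ 2 * w)).sub
      ((hasDerivAt_id z).mul_const w)).const_mul μ |>.congr_deriv (by ring)
  have hD' : HasDerivAt (fun ζ => denom s t (ζ, w)) (-conj (t ^ 2)) z :=
    (((hasDerivAt_id z).const_mul (conj (t ^ 2))).const_sub 1).sub_const (conj (s ^ 2) * w)
      |>.congr_deriv (by ring)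
  refine (hN.div hD' hD).congr_deriv ?_
  rw [← deriv_fst_numerator_eq_sq hst]
  ring

theorem hasDerivAt_extremalFun_snd (hst : ‖s‖ ^ 2 + ‖t‖ ^ 2 = 1) {z w : ℂ}
    (hD : denom s t (z, w) ≠ 0) :
    HasDerivAt (fun ζ => extremalFun μ s t (z, ζ))
      (μ * (t - conj t * z) ^ 2 / denom s t (z, w) ^ 2) w := by
  rw [← denom_swap] at hD ⊢
  simpa only [← extremalFun_swap μ t s, Prod.swap_prod_mk] using
    hasDerivAt_extremalFun_fst (μ := μ) (by rwa [add_comm]) hD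

theorem differentiableAt_extremalFun {p : ℂ × ℂ} (hD : denom s t p ≠ 0) :
    DifferentiableAt ℂ (extremalFun μ s t) p := by
  unfold denom at hD
  unfold extremalFun numer denom
  fun_prop (disch := exact hD)

theorem norm_extremalFun (hμ : ‖μ‖ = 1) (p : ℂ × ℂ) :
    ‖extremalFun μ s t p‖ = ‖numer s t p‖ / ‖denom s t p‖ := by
  rw [extremalFun, norm_div, norm_mul, hμ, one_mul]

theorem norm_fderiv_extremalFun_apply_one_zero (hμ : ‖μ‖ = 1) (hst : ‖s‖ ^ 2 + ‖t‖ ^ 2 = 1)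
    {p : ℂ × ℂ} (hD : denom s t p ≠ 0) :
    ‖fderiv ℂ (extremalFun μ s t) p (1, 0)‖ = ‖s - conj s * p.2‖ ^ 2 / ‖denom s t p‖ ^ 2 := by
  rw [((differentiableAt_extremalFun hD).hasDerivAt_fderiv_apply_one_zero).unique
    (hasDerivAt_extremalFun_fst hst hD)]
  simp only [norm_div, norm_mul, hμ, one_mul, norm_pow]

theorem norm_fderiv_extremalFun_apply_zero_one (hμ : ‖μ‖ = 1) (hst : ‖s‖ ^ 2 + ‖t‖ ^ 2 = 1)
    {p : ℂ × ℂ} (hD : denom s t p ≠ 0) :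
    ‖fderiv ℂ (extremalFun μ s t) p (0, 1)‖ = ‖t - conj t * p.1‖ ^ 2 / ‖denom s t p‖ ^ 2 := by
  rw [((differentiableAt_extremalFun hD).hasDerivAt_fderiv_apply_zero_one).unique
    (hasDerivAt_extremalFun_snd hst hD)]
  simp only [norm_div, norm_mul, hμ, one_mul, norm_pow]

theorem norm_extremalFun_lt_one (hμ : ‖μ‖ = 1) (hst : ‖s‖ ^ 2 + ‖t‖ ^ 2 = 1) {p : ℂ × ℂ}
    (hp : p ∈ bidisk) : ‖extremalFun μ s t p‖ < 1 := by
  rw [norm_extremalFun hμ, div_lt_one ((norm_nonneg _).trans_lt (norm_numer_lt_norm_denom hst hp))]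
  exact norm_numer_lt_norm_denom hst hp

theorem bidisk_subset_extremeSet (hμ : ‖μ‖ = 1) (hst : ‖s‖ ^ 2 + ‖t‖ ^ 2 = 1) :
    bidisk ⊆ extremeSet (extremalFun μ s t) := by
  intro p hp
  have hD := denom_ne_zero hst hp
  refine ⟨hp, ?_⟩
  rw [norm_extremalFun hμ, norm_fderiv_extremalFun_apply_one_zero hμ hst hD,
    norm_fderiv_extremalFun_apply_zero_one hμ hst hD]
  field_simp
  linear_combination norm_sq_denom_sub_norm_sq_numer hst p

end ExtremalFun

open ExtremalFun

/-- For `|μ| = 1` and `|a| + |b| = 1`, the function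
`f(z,w) = μ (az + bw - zw)/(1 - conj b ⬝ z - conj a ⬝ w)` is a well-defined holomorphic map
from the bidisk to the disk with `f(0,0) = 0` which is everywhere infinitesimally extremal. -/
theorem explicit_extremal_function (a b μ : ℂ) (hμ : ‖μ‖ = 1) (hab : ‖a‖ + ‖b‖ = 1)
    (f : ℂ × ℂ → ℂ)
    (hfdef : ∀ p : ℂ × ℂ, f p = μ * (a * p.1 + b * p.2 - p.1 * p.2) /
      (1 - (starRingEnd ℂ) b * p.1 - (starRingEnd ℂ) a * p.2)) :
    (∀ p ∈ bidisk, 1 - (starRingEnd ℂ) b * p.1 - (starRingEnd ℂ) a * p.2 ≠ 0) ∧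
    DifferentiableOn ℂ f bidisk ∧
    (∀ p ∈ bidisk, ‖f p‖ < 1) ∧
    f (0, 0) = 0 ∧
    ∀ p ∈ bidisk, 1 - ‖f p‖ ^ 2 =
      (1 - ‖p.1‖ ^ 2) * ‖fderiv ℂ f p (1, 0)‖ +
      (1 - ‖p.2‖ ^ 2) * ‖fderiv ℂ f p (0, 1)‖ := by
  obtain ⟨s, rfl⟩ := IsAlgClosed.exists_pow_nat_eq a two_pos
  obtain ⟨t, rfl⟩ := IsAlgClosed.exists_pow_nat_eq b two_pos
  have hst : ‖s‖ ^ 2 + ‖t‖ ^ 2 = 1 := by simpa only [norm_pow] using hab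
  obtain rfl : f = extremalFun μ s t := funext hfdef
  refine ⟨fun p hp => denom_ne_zero hst hp,
    fun p hp => (differentiableAt_extremalFun (denom_ne_zero hst hp)).differentiableWithinAt,
    fun p hp => norm_extremalFun_lt_one hμ hst hp, by simp [extremalFun, numer],
    fun p hp => (bidisk_subset_extremeSet hμ hst hp).2⟩
end

section
/- Let a, b be real numbers with a > 0, b > 0, a + b = 1, and define f(z,w) = (az + bw − zw)/(1 − bz − aw) on 𝔻². Then lim_{θ → 0} f(e^{iθ}, e^{itθ}) = 1 for every real t ≠ −b/a, while lim_{θ → 0} f(e^{iθ}, e^{itθ}) = −1 for t = −b/a (here the limit is over real θ → 0 with θ ≠ 0, along points where f is defined). In particular, f does not extend continuously to the closed bidisk. -/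
open Complex Filter

/-!
On the torus the numerator of `f` is `-zw` times the conjugate of the denominator `D`, so there
`f = -zw · conj D / D`. Along `θ ↦ (e^{iθ}, e^{itθ})` the Taylor expansion reads
`D(θ) = -i(b + at)θ + (b + at²)θ²/2 + o(θ²)`: for `b + at ≠ 0` the leading term is purely
imaginary and `conj D / D → -1`, while for `t = -b/a` it is real and positive and
`conj D / D → 1`. A continuous extension agrees with `f` at the points of the torus where
`D ≠ 0`, so both limits would be its value at `(1, 1)`.
-/

open ComplexConjugate Topology Asymptotics

lemma Complex.isLittleO_exp_sub_one_sub_id_sub_sq_div_two :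
    (fun z : ℂ => exp z - (1 + z + z ^ 2 / 2)) =o[𝓝 0] (· ^ 2) := by
  simpa [Finset.sum_range_succ, add_assoc] using Complex.exp_sub_sum_range_succ_isLittleO_pow 2

lemma isLittleO_exp_I_mul_sub_quadratic (s : ℝ) :
    (fun θ : ℝ => exp (I * (s * θ)) - (1 + I * (s * θ) - s ^ 2 * θ ^ 2 / 2))
      =o[𝓝 0] (fun θ : ℝ => (θ : ℂ) ^ 2) := by
  have hk : Tendsto (fun θ : ℝ => I * (s * θ)) (𝓝 0) (𝓝 0) := by
    simpa using ((continuous_ofReal.const_mul (s : ℂ)).const_mul I).tendsto (0 : ℝ)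
  refine (Complex.isLittleO_exp_sub_one_sub_id_sub_sq_div_two.comp_tendsto hk).congr_left
    (fun θ => ?_) |>.trans_isBigO (isBigO_of_le' (c := s ^ 2) _ fun θ => ?_)
  · simp only [Function.comp_apply]
    linear_combination -(s * θ) ^ 2 / 2 * I_sq
  · simp [mul_pow]

noncomputable def extremal (a b : ℝ) (p : ℂ × ℂ) : ℂ :=
  (a * p.1 + b * p.2 - p.1 * p.2) / (1 - b * p.1 - a * p.2)

noncomputable def torusCurve (t θ : ℝ) : ℂ × ℂ :=
  (exp (I * θ), exp (I * (t * θ)))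

noncomputable def torusDenom (a b t θ : ℝ) : ℂ :=
  1 - b * (torusCurve t θ).1 - a * (torusCurve t θ).2

section Denominator

variable {a b : ℝ}

lemma torusDenom_sub_isLittleO (hab : a + b = 1) (t : ℝ) :
    (fun θ : ℝ => torusDenom a b t θ - (-I * (b + a * t) * θ + (b + a * t ^ 2) / 2 * θ ^ 2))
      =o[𝓝 0] (fun θ : ℝ => (θ : ℂ) ^ 2) := by
  have hab' : (a : ℂ) + b = 1 := by exact_mod_cast hab
  refine (((isLittleO_exp_I_mul_sub_quadratic 1).const_mul_left (-b)).add
    ((isLittleO_exp_I_mul_sub_quadratic t).const_mul_left (-a))).congr_left fun θ => ?_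
  simp only [torusDenom, torusCurve, ofReal_one, one_mul]
  linear_combination hab'

lemma tendsto_torusDenom_div (hab : a + b = 1) (t : ℝ) :
    Tendsto (fun θ : ℝ => torusDenom a b t θ / θ) (𝓝[≠] 0) (𝓝 (-I * (b + a * t))) := by
  have hrem := (torusDenom_sub_isLittleO hab t).tendsto_div_nhds_zero
  have hid : Tendsto (fun θ : ℝ => (θ : ℂ)) (𝓝 0) (𝓝 0) := by
    simpa using continuous_ofReal.tendsto (0 : ℝ)
  have h := (tendsto_const_nhds (x := -I * (b + a * t))).add
    (hid.mul ((tendsto_const_nhds (x := ((b + a * t ^ 2) / 2 : ℂ))).add hrem))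
  rw [zero_mul, add_zero] at h
  refine (h.mono_left nhdsWithin_le_nhds).congr' ?_
  filter_upwards [self_mem_nhdsWithin] with θ (hθ : θ ≠ 0)
  have hθ : (θ : ℂ) ≠ 0 := ofReal_ne_zero.2 hθ
  field_simp
  ring

lemma tendsto_torusDenom_div_sq (hab : a + b = 1) {t : ℝ} (ht : b + a * t = 0) :
    Tendsto (fun θ : ℝ => torusDenom a b t θ / (θ : ℂ) ^ 2) (𝓝[≠] 0)
      (𝓝 (((b + a * t ^ 2) / 2 : ℝ) : ℂ)) := by
  have ht' : (b : ℂ) + a * t = 0 := by exact_mod_cast ht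
  have hrem := (torusDenom_sub_isLittleO hab t).tendsto_div_nhds_zero
  have h := (tendsto_const_nhds (x := ((b + a * t ^ 2) / 2 : ℂ))).add hrem
  rw [add_zero] at h
  push_cast
  refine (h.mono_left nhdsWithin_le_nhds).congr' ?_
  filter_upwards [self_mem_nhdsWithin] with θ (hθ : θ ≠ 0)
  have hθ : (θ : ℂ) ≠ 0 := ofReal_ne_zero.2 hθ
  rw [ht']
  field_simp
  ring

end Denominator

lemma num_eq_neg_mul_conj_denom (a b : ℝ) {z w : ℂ} (hz : ‖z‖ = 1) (hw : ‖w‖ = 1) :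
    a * z + b * w - z * w = -(z * w) * conj (1 - b * z - a * w) := by
  have hz' : z * conj z = 1 := by rw [mul_conj', hz]; norm_num
  have hw' : w * conj w = 1 := by rw [mul_conj', hw]; norm_num
  simp only [map_sub, map_one, map_mul, conj_ofReal]
  linear_combination (-(b : ℂ) * w) * hz' - a * z * hw'

lemma extremal_torusCurve (a b t θ : ℝ) :
    extremal a b (torusCurve t θ) = -((torusCurve t θ).1 * (torusCurve t θ).2) *
      (conj (torusDenom a b t θ) / torusDenom a b t θ) := by
  rw [extremal, num_eq_neg_mul_conj_denom a b, torusDenom, mul_div_assoc] <;>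
  simp only [torusCurve, ← ofReal_mul, norm_exp_I_mul_ofReal]

section RealScaling

variable {α : Type*} {l : Filter α} {u : α → ℂ} {r : α → ℝ} {c : ℂ}

lemma eventually_ne_zero_of_tendsto_div_ofReal (hc : c ≠ 0)
    (h : Tendsto (fun x => u x / r x) l (𝓝 c)) : ∀ᶠ x in l, u x ≠ 0 ∧ (r x : ℂ) ≠ 0 := by
  filter_upwards [h.eventually_ne hc] with x hx
  exact ⟨fun h0 => hx (by rw [h0, zero_div]), fun h0 => hx (by rw [h0, div_zero])⟩

lemma tendsto_conj_div_self (hc : c ≠ 0) (h : Tendsto (fun x => u x / r x) l (𝓝 c)) :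
    Tendsto (fun x => conj (u x) / u x) l (𝓝 (conj c / c)) := by
  refine ((continuous_conj.tendsto c).comp h |>.div h hc).congr' ?_
  filter_upwards [eventually_ne_zero_of_tendsto_div_ofReal hc h] with x ⟨hu, hr⟩
  rw [Pi.div_apply, Function.comp_apply, map_div₀, conj_ofReal]
  field_simp

end RealScaling

lemma tendsto_torusCurve (t : ℝ) : Tendsto (torusCurve t) (𝓝 0) (𝓝 (1, 1)) := by
  have : Continuous (torusCurve t) := by unfold torusCurve; fun_prop
  simpa [torusCurve] using this.tendsto 0

lemma tendsto_extremal_torusCurve {a b t : ℝ} {r : ℝ → ℝ} {c : ℂ} (hc : c ≠ 0)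
    (h : Tendsto (fun θ => torusDenom a b t θ / r θ) (𝓝[≠] 0) (𝓝 c)) :
    Tendsto (fun θ => extremal a b (torusCurve t θ)) (𝓝[≠] 0) (𝓝 (-(conj c / c))) := by
  have hzw : Tendsto (fun θ => -((torusCurve t θ).1 * (torusCurve t θ).2)) (𝓝[≠] 0) (𝓝 (-1)) := by
    simpa using (((tendsto_torusCurve t).fst_nhds.mul (tendsto_torusCurve t).snd_nhds).neg).mono_left
      nhdsWithin_le_nhds
  simpa [extremal_torusCurve] using hzw.mul (tendsto_conj_div_self hc h)

lemma eq_of_continuousOn_closure_of_continuousAt {X Y : Type*} [TopologicalSpace X]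
    [TopologicalSpace Y] [T2Space Y] {s : Set X} {f g : X → Y} (hg : ContinuousOn g (closure s))
    (hgf : Set.EqOn g f s) {x : X} (hx : x ∈ closure s) (hf : ContinuousAt f x) : g x = f x := by
  have := mem_closure_iff_nhdsWithin_neBot.1 hx
  exact tendsto_nhds_unique (((hg x hx).mono subset_closure).tendsto.congr'
    (eventuallyEq_nhdsWithin_of_eqOn hgf)) (hf.tendsto.mono_left nhdsWithin_le_nhds)

lemma closure_bidisk : closure bidisk = Metric.closedBall (0 : ℂ) 1 ×ˢ Metric.closedBall 0 1 := by
  have : bidisk = Metric.ball (0 : ℂ) 1 ×ˢ Metric.ball 0 1 := by ext; simp [bidisk]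
  rw [this, closure_prod_eq, closure_ball _ one_ne_zero]

lemma torusCurve_mem_closure_bidisk (t θ : ℝ) : torusCurve t θ ∈ closure bidisk := by
  simp [closure_bidisk, torusCurve, ← ofReal_mul]

lemma continuousAt_extremal {a b : ℝ} {p : ℂ × ℂ} (hp : 1 - b * p.1 - a * p.2 ≠ 0) :
    ContinuousAt (extremal a b) p :=
  ContinuousAt.div (by fun_prop) (by fun_prop) hp

lemma tendsto_extremal_torusCurve_of_extension {a b t : ℝ} {g : ℂ × ℂ → ℂ}
    (hg : ContinuousOn g (closure bidisk)) (hgf : Set.EqOn g (extremal a b) bidisk)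
    (hden : ∀ᶠ θ in 𝓝[≠] 0, torusDenom a b t θ ≠ 0) :
    Tendsto (fun θ => extremal a b (torusCurve t θ)) (𝓝[≠] 0) (𝓝 (g (1, 1))) := by
  have hone : torusCurve t 0 = (1, 1) := by simp [torusCurve]
  have hcurve : Tendsto (torusCurve t) (𝓝[≠] 0) (𝓝[closure bidisk] (1, 1)) :=
    tendsto_nhdsWithin_iff.2 ⟨(tendsto_torusCurve t).mono_left nhdsWithin_le_nhds,
      .of_forall (torusCurve_mem_closure_bidisk t)⟩
  refine ((hg _ (hone ▸ torusCurve_mem_closure_bidisk t 0)).tendsto.comp hcurve).congr' ?_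
  filter_upwards [hden] with θ hθ
  exact eq_of_continuousOn_closure_of_continuousAt hg hgf (torusCurve_mem_closure_bidisk t θ)
    (continuousAt_extremal hθ)

/-- For `a, b > 0` with `a + b = 1`, the extremal function
`f(z,w) = (az + bw - zw)/(1 - bz - aw)` satisfies
`lim_{θ→0} f(e^{iθ}, e^{itθ}) = 1` for `t ≠ -b/a` and `= -1` for `t = -b/a`; in
particular `f` does not extend continuously to the closed bidisk. -/
theorem extremal_no_continuous_extension (a b : ℝ) (ha : 0 < a) (hb : 0 < b)
    (hab : a + b = 1) (f : ℂ × ℂ → ℂ)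
    (hfdef : ∀ p : ℂ × ℂ, f p = ((a : ℂ) * p.1 + (b : ℂ) * p.2 - p.1 * p.2) /
      (1 - (b : ℂ) * p.1 - (a : ℂ) * p.2)) :
    (∀ t : ℝ, t ≠ -b / a →
      Tendsto (fun θ : ℝ =>
          f (Complex.exp (Complex.I * (θ : ℂ)), Complex.exp (Complex.I * ((t : ℂ) * (θ : ℂ)))))
        (nhdsWithin (0 : ℝ) {(0 : ℝ)}ᶜ) (nhds 1)) ∧
    (Tendsto (fun θ : ℝ =>
          f (Complex.exp (Complex.I * (θ : ℂ)),
            Complex.exp (Complex.I * (((-b / a : ℝ) : ℂ) * (θ : ℂ)))))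
        (nhdsWithin (0 : ℝ) {(0 : ℝ)}ᶜ) (nhds (-1))) ∧
    ¬∃ g : ℂ × ℂ → ℂ, ContinuousOn g (closure bidisk) ∧ ∀ p ∈ bidisk, g p = f p := by
  obtain rfl : f = extremal a b := funext hfdef
  have hne : ∀ t : ℝ, t ≠ -b / a → -I * (b + a * t) ≠ 0 := fun t ht => by
    have : b + a * t ≠ 0 := fun h => ht (by field_simp; linarith)
    exact mul_ne_zero (neg_ne_zero.2 I_ne_zero) (mod_cast this)
  have hsq : Tendsto (fun θ : ℝ => torusDenom a b (-b / a) θ / ((θ ^ 2 : ℝ) : ℂ)) (𝓝[≠] 0)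
      (𝓝 (((b + a * (-b / a) ^ 2) / 2 : ℝ) : ℂ)) := by
    simpa using tendsto_torusDenom_div_sq (t := -b / a) hab (by field_simp; ring)
  have hpos : (((b + a * (-b / a) ^ 2) / 2 : ℝ) : ℂ) ≠ 0 := ofReal_ne_zero.2 (by positivity)
  have h₁ : ∀ t : ℝ, t ≠ -b / a →
      Tendsto (fun θ => extremal a b (torusCurve t θ)) (𝓝[≠] 0) (𝓝 1) := fun t ht => by
    have hconj : conj (-I * (b + a * t)) = -(-I * (b + a * t)) := by simp [conj_ofReal]
    convert tendsto_extremal_torusCurve (hne t ht) (tendsto_torusDenom_div hab t)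
    rw [hconj, neg_div, div_self (hne t ht), neg_neg]
  have h₂ : Tendsto (fun θ => extremal a b (torusCurve (-b / a) θ)) (𝓝[≠] 0) (𝓝 (-1)) := by
    convert tendsto_extremal_torusCurve hpos hsq
    rw [conj_ofReal, div_self hpos]
  refine ⟨h₁, h₂, fun ⟨g, hg, hgf⟩ => ?_⟩
  have h1 : (1 : ℝ) ≠ -b / a := by have := div_pos hb ha; intro h; linarith [neg_div a b]
  have e₁ := tendsto_nhds_unique (tendsto_extremal_torusCurve_of_extension hg hgf
    ((eventually_ne_zero_of_tendsto_div_ofReal (hne 1 h1) (tendsto_torusDenom_div hab 1)).mono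
      fun _ => And.left)) (h₁ 1 h1)
  have e₂ := tendsto_nhds_unique (tendsto_extremal_torusCurve_of_extension hg hgf
    ((eventually_ne_zero_of_tendsto_div_ofReal hpos hsq).mono fun _ => And.left)) h₂
  norm_num [e₁] at e₂
end
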